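/- arXiv:2310.08562 — 5 statements merged into one kernel-verified Lean document; each statement's English description precedes it below -/
import Mathlib

section
/- Second moment bound for the Boltzmann–Gibbs reweighting: Let E : ℝ^d → ℝ be continuous and satisfy the growth conditions with global minimizer x⋆. Then there exist constants b_1, b_2 > 0, depending only on c_u, c_l and R_l, such that for every α ≥ 1 and every f ∈ P_2(ℝ^d), ∫ |x|² dη^α[f](x) ≤ b_1 + b_2 ∫ |x|² df(x). -/
open MeasureTheory ProbabilityTheory Real Set

noncomputable section

/-- The search space `ℝ^d` with the Euclidean norm. -/
abbrev Ed (d : ℕ) : Type := EuclideanSpace ℝ (Fin d)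

/-- The standard Gaussian measure `N(0, I_d)` on `ℝ^d`. -/
def stdGaussian (d : ℕ) : Measure (Ed d) :=
  (Measure.pi fun _ : Fin d => gaussianReal 0 1).map
    (MeasurableEquiv.toLp 2 (Fin d → ℝ))

/-- The crossover–mutation collision map
`C(x, x_*, ξ) = (1-γ)⊙x + γ⊙x_* + σξ` (with `D = I_d`). -/
def coll {d : ℕ} (γ : Fin d → ℝ) (σ : ℝ) (x xs ξ : Ed d) : Ed d :=
  WithLp.toLp 2 fun i => (1 - γ i) * x i + γ i * xs i + σ * ξ i

/-- The Boltzmann–Gibbs measure `η^α[f]`, with density `e^{-αE}/Z^α[f]` w.r.t. `f`. -/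
def gibbs {d : ℕ} (E : Ed d → ℝ) (α : ℝ) (f : Measure (Ed d)) : Measure (Ed d) :=
  (∫⁻ x, ENNReal.ofReal (Real.exp (-α * E x)) ∂f)⁻¹ •
    f.withDensity fun x => ENNReal.ofReal (Real.exp (-α * E x))

/-- One step of the GA kinetic evolution with Boltzmann selection:
`f ↦ (1-τ) f + τ C_#(η^α[f] ⊗ η^α[f] ⊗ N(0,I_d))`. -/
def gaStep {d : ℕ} (E : Ed d → ℝ) (α τ σ : ℝ) (γ : Fin d → ℝ)
    (f : Measure (Ed d)) : Measure (Ed d) :=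
  ENNReal.ofReal (1 - τ) • f +
    ENNReal.ofReal τ •
      Measure.map (fun p : (Ed d × Ed d) × Ed d => coll γ σ p.1.1 p.1.2 p.2)
        (((gibbs E α f).prod (gibbs E α f)).prod (stdGaussian d))

/-- The GA kinetic sequence `(f_(k))` with Boltzmann selection started at `f0`. -/
def gaSeq {d : ℕ} (E : Ed d → ℝ) (α τ σ : ℝ) (γ : Fin d → ℝ)
    (f0 : Measure (Ed d)) : ℕ → Measure (Ed d)
  | 0 => f0
  | k + 1 => gaStep E α τ σ γ (gaSeq E α τ σ γ f0 k)

/-- The mean `m[f] = ∫ x df(x)`. -/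
def mean {d : ℕ} (f : Measure (Ed d)) : Ed d := ∫ x, x ∂f

/-- The weighted mean `m^α[f] = (∫ x e^{-αE(x)} df(x)) / (∫ e^{-αE(x)} df(x))`. -/
def wmean {d : ℕ} (E : Ed d → ℝ) (α : ℝ) (f : Measure (Ed d)) : Ed d :=
  (∫ x, Real.exp (-α * E x) ∂f)⁻¹ • ∫ x, Real.exp (-α * E x) • x ∂f

/-- `t e^{-st} ≤ 1/s`. -/
lemma aux_mul_exp_neg_le (s t : ℝ) (hs : 0 < s) :
    t * Real.exp (-(s * t)) ≤ 1 / s := by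
  rw [le_div_iff₀ hs]
  have h1 : s * t ≤ Real.exp (s * t) := by nlinarith [Real.add_one_le_exp (s * t)]
  have h2 : (0:ℝ) < Real.exp (-(s * t)) := Real.exp_pos _
  calc t * Real.exp (-(s * t)) * s = (s * t) * Real.exp (-(s * t)) := by ring
    _ ≤ Real.exp (s * t) * Real.exp (-(s * t)) := by nlinarith
    _ = 1 := by rw [← Real.exp_add]; simp

/-- pointwise bound on the outer region -/
lemma aux_outer (α cl cu M t gx : ℝ) (hα : 1 ≤ α) (hcl : 0 < cl) (hcu : 0 < cu)
    (hM : 0 ≤ M) (ht : 2 * cu / cl * (2 + M) ≤ t) (ht0 : 0 ≤ t)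
    (hgx : cl * t ≤ gx) :
    Real.exp (-(α * gx)) * t ≤ Real.exp (-(α * (cu * (2 + M)))) * (2 / cl) := by
  have hα0 : (0:ℝ) < α := lt_of_lt_of_le one_pos hα
  have hu_le : Real.exp (-(α * gx))
      ≤ Real.exp (-(α * (cl * t / 2))) * Real.exp (-(α * (cl * t / 2))) := by
    rw [← Real.exp_add]
    refine Real.exp_le_exp.2 ?_
    nlinarith
  have h7 : cu * (2 + M) ≤ cl * t / 2 := by
    rw [div_mul_eq_mul_div, div_le_iff₀ hcl] at ht
    nlinarith
  have hE1C : Real.exp (-(α * (cl * t / 2))) ≤ Real.exp (-(α * (cu * (2 + M)))) := by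
    refine Real.exp_le_exp.2 ?_
    nlinarith
  have hE1t : Real.exp (-(α * (cl * t / 2))) * t ≤ 2 / cl := by
    have h8 := aux_mul_exp_neg_le (α * cl / 2) t (by positivity)
    have h9 : α * cl / 2 * t = α * (cl * t / 2) := by ring
    rw [h9] at h8
    have h10 : 1 / (α * cl / 2) = 2 / (α * cl) := by field_simp
    rw [h10] at h8
    have h11 : 2 / (α * cl) ≤ 2 / cl := by
      apply div_le_div_of_nonneg_left (by norm_num) hcl
      nlinarith
    linarith [h8, mul_comm t (Real.exp (-(α * (cl * t / 2))))]
  have hE1pos : 0 < Real.exp (-(α * (cl * t / 2))) := Real.exp_pos _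
  have hCpos : 0 < Real.exp (-(α * (cu * (2 + M)))) := Real.exp_pos _
  calc Real.exp (-(α * gx)) * t
      ≤ (Real.exp (-(α * (cl * t / 2))) * Real.exp (-(α * (cl * t / 2)))) * t := by
        nlinarith [Real.exp_pos (-(α * gx))]
    _ = Real.exp (-(α * (cl * t / 2))) * (Real.exp (-(α * (cl * t / 2))) * t) := by ring
    _ ≤ Real.exp (-(α * (cu * (2 + M)))) * (2 / cl) :=
        mul_le_mul hE1C hE1t (by positivity) hCpos.le

set_option maxHeartbeats 1000000 in
/-- **Second moment bound for the Boltzmann–Gibbs reweighting.**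
There are constants `b₁, b₂ > 0` (depending only on `c_u, c_l, R_l`) such that
`∫ |x|² dη^α[f] ≤ b₁ + b₂ ∫ |x|² df` for all `α ≥ 1` and all `f ∈ P₂(ℝ^d)`. -/
theorem gibbs_second_moment_bound
    {d : ℕ} (hd : 1 ≤ d) (E : Ed d → ℝ) (hE : Continuous E)
    (xstar : Ed d) (hmin : ∀ x, E xstar ≤ E x)
    (cu cl Rl : ℝ) (hcu : 0 < cu) (hcl : 0 < cl) (hRl : 0 < Rl)
    (hgu : ∀ x, E x - E xstar ≤ cu * (1 + ‖x‖ ^ 2))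
    (hgl : ∀ x, Rl < ‖x‖ → cl * ‖x‖ ^ 2 ≤ E x - E xstar) :
    ∃ b₁ > (0 : ℝ), ∃ b₂ > (0 : ℝ),
      ∀ α : ℝ, 1 ≤ α →
        ∀ f : Measure (Ed d), IsProbabilityMeasure f →
          Integrable (fun x => ‖x‖ ^ 2) f →
          ∫ x, ‖x‖ ^ 2 ∂(gibbs E α f) ≤ b₁ + b₂ * ∫ x, ‖x‖ ^ 2 ∂f := by
  refine ⟨Rl ^ 2 + 4 * cu / cl + 2 / cl, by positivity,
    2 * cu / cl + 2 / cl, by positivity, ?_⟩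
  intro α hα f hf h2
  have hα0 : (0:ℝ) < α := lt_of_lt_of_le one_pos hα
  set M := ∫ x, ‖x‖ ^ 2 ∂f with hM
  have hM0 : 0 ≤ M := integral_nonneg fun x => by positivity
  -- the functions g and u
  set g : Ed d → ℝ := fun x => E x - E xstar with hgdef
  have hg0 : ∀ x, 0 ≤ g x := fun x => sub_nonneg.2 (hmin x)
  have hgu' : ∀ x, g x ≤ cu * (1 + ‖x‖ ^ 2) := hgu
  have hgl' : ∀ x, Rl < ‖x‖ → cl * ‖x‖ ^ 2 ≤ g x := hgl
  set u : Ed d → ℝ := fun x => Real.exp (-(α * g x)) with hudef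
  have huc : Continuous u := by fun_prop
  have hu0 : ∀ x, 0 < u x := fun x => Real.exp_pos _
  have hu1 : ∀ x, u x ≤ 1 := fun x =>
    Real.exp_le_one_iff.2 (by nlinarith [hg0 x])
  have hu0ae : 0 ≤ᵐ[f] u := Filter.Eventually.of_forall fun x => (hu0 x).le
  have huint : Integrable u f := by
    refine Integrable.mono' (integrable_const 1) huc.aestronglyMeasurable ?_
    filter_upwards with x
    rw [Real.norm_eq_abs, abs_of_pos (hu0 x)]; exact hu1 x
  have huxc : Continuous fun x : Ed d => u x * ‖x‖ ^ 2 := by fun_prop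
  have huxint : Integrable (fun x => u x * ‖x‖ ^ 2) f := by
    refine Integrable.mono h2 huxc.aestronglyMeasurable ?_
    filter_upwards with x
    rw [Real.norm_eq_abs, Real.norm_eq_abs, abs_of_nonneg (by positivity),
      abs_of_nonneg (by positivity : (0:ℝ) ≤ ‖x‖ ^ 2)]
    nlinarith [hu0 x, hu1 x, sq_nonneg ‖x‖, norm_nonneg x]
  have huIpos : 0 < ∫ x, u x ∂f := by
    rw [integral_pos_iff_support_of_nonneg_ae hu0ae huint]
    have hs : Function.support u = Set.univ := by
      ext x; simp [Function.mem_support, (hu0 x).ne']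
    rw [hs]
    simp
  have huI0 : 0 ≤ ∫ x, u x ∂f := huIpos.le
  -- constants
  set R2 : ℝ := max (Rl ^ 2) (2 * cu / cl * (2 + M)) with hR2
  have hR2a : Rl ^ 2 ≤ R2 := le_max_left _ _
  have hR2b : 2 * cu / cl * (2 + M) ≤ R2 := le_max_right _ _
  have hR2nn : 0 ≤ R2 := le_trans (by positivity) hR2a
  set C : ℝ := Real.exp (-(α * (cu * (2 + M)))) with hC
  have hCpos : 0 < C := Real.exp_pos _
  -- (a) lower bound on ∫ u via Markov
  have hCle : C ≤ (M + 1) * ∫ x, u x ∂f := by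
    set B : Set (Ed d) := {x | ‖x‖ ^ 2 < M + 1} with hB
    have hBm : MeasurableSet B :=
      measurableSet_lt (by fun_prop) measurable_const
    have hmar : (M + 1) * (f {x | M + 1 ≤ ‖x‖ ^ 2}).toReal ≤ M :=
      mul_meas_ge_le_integral_of_nonneg
        (Filter.Eventually.of_forall fun x => by positivity) h2 (M + 1)
    have hcompl : Bᶜ = {x | M + 1 ≤ ‖x‖ ^ 2} := by
      ext x; simp [hB, not_lt]
    have hsum : (f B).toReal + (f Bᶜ).toReal = 1 := by
      rw [← ENNReal.toReal_add (measure_ne_top f B) (measure_ne_top f Bᶜ),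
        measure_add_measure_compl hBm]
      simp
    have hfB : 1 / (M + 1) ≤ (f B).toReal := by
      rw [← hcompl] at hmar
      rw [div_le_iff₀ (by linarith : (0:ℝ) < M + 1)]
      nlinarith
    have hlow : C * (f B).toReal ≤ ∫ x, u x ∂f := by
      have h3 : ∫ _ in B, C ∂f ≤ ∫ x in B, u x ∂f := by
        refine setIntegral_mono_on (integrableOn_const (measure_ne_top f B))
          huint.integrableOn hBm fun x hx => ?_
        have hxB : ‖x‖ ^ 2 < M + 1 := hx
        refine Real.exp_le_exp.2 ?_
        have hgx : g x ≤ cu * (2 + M) := by nlinarith [hgu' x]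
        nlinarith [hg0 x]
      rw [setIntegral_const, smul_eq_mul, mul_comm] at h3
      exact h3.trans (setIntegral_le_integral huint hu0ae)
    have h4 : C * (1 / (M + 1)) ≤ ∫ x, u x ∂f :=
      le_trans (by nlinarith) hlow
    rw [div_eq_mul_inv] at h4
    have hM1 : (0:ℝ) < M + 1 := by linarith
    calc C = (M + 1) * (C * (1 * (M + 1)⁻¹)) := by field_simp
      _ ≤ (M + 1) * ∫ x, u x ∂f := by nlinarith
  -- (b) splitting set
  set A : Set (Ed d) := {x | ‖x‖ ^ 2 ≤ R2} with hA
  have hAm : MeasurableSet A := measurableSet_le (by fun_prop) measurable_const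
  have hsplit : ∫ x, u x * ‖x‖ ^ 2 ∂f
      = (∫ x in A, u x * ‖x‖ ^ 2 ∂f) + ∫ x in Aᶜ, u x * ‖x‖ ^ 2 ∂f :=
    (integral_add_compl hAm huxint).symm
  -- (c) inner part
  have hpartA : ∫ x in A, u x * ‖x‖ ^ 2 ∂f ≤ R2 * ∫ x, u x ∂f := by
    have h5 : ∫ x in A, u x * ‖x‖ ^ 2 ∂f ≤ ∫ x in A, R2 * u x ∂f := by
      refine setIntegral_mono_on huxint.integrableOn
        (huint.const_mul R2).integrableOn hAm fun x hx => ?_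
      have hxA : ‖x‖ ^ 2 ≤ R2 := hx
      nlinarith [hu0 x]
    rw [integral_const_mul] at h5
    refine h5.trans (mul_le_mul_of_nonneg_left ?_ hR2nn)
    exact setIntegral_le_integral huint hu0ae
  -- (d) outer part
  have hpartB : ∫ x in Aᶜ, u x * ‖x‖ ^ 2 ∂f ≤ C * (2 / cl) := by
    have hpt : ∀ x ∈ Aᶜ, u x * ‖x‖ ^ 2 ≤ C * (2 / cl) := by
      intro x hx
      have hxA : R2 < ‖x‖ ^ 2 := not_le.1 hx
      have hxR : Rl < ‖x‖ :=
        lt_of_pow_lt_pow_left₀ 2 (norm_nonneg x) (lt_of_le_of_lt hR2a hxA)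
      exact aux_outer α cl cu M (‖x‖ ^ 2) (g x) hα hcl hcu hM0
        (le_trans hR2b hxA.le) (by positivity) (hgl' x hxR)
    have h12 : ∫ x in Aᶜ, u x * ‖x‖ ^ 2 ∂f ≤ ∫ _ in Aᶜ, C * (2 / cl) ∂f := by
      exact setIntegral_mono_on huxint.integrableOn
        (integrableOn_const (measure_ne_top f Aᶜ)) hAm.compl hpt
    rw [setIntegral_const, smul_eq_mul] at h12
    refine h12.trans ?_
    have h13 : (f Aᶜ).toReal ≤ 1 := by
      have := prob_le_one (μ := f) (s := Aᶜ)
      simpa using ENNReal.toReal_mono ENNReal.one_ne_top this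
    calc (f Aᶜ).toReal * (C * (2 / cl)) ≤ 1 * (C * (2 / cl)) :=
          mul_le_mul_of_nonneg_right h13 (by positivity)
      _ = C * (2 / cl) := one_mul _
  -- (e) core estimate
  have hcore : ∫ x, u x * ‖x‖ ^ 2 ∂f
      ≤ (Rl ^ 2 + 4 * cu / cl + 2 / cl + (2 * cu / cl + 2 / cl) * M) * ∫ x, u x ∂f := by
    have hR2sum : R2 ≤ Rl ^ 2 + 2 * cu / cl * (2 + M) :=
      max_le (le_add_of_nonneg_right (by positivity)) (le_add_of_nonneg_left (by positivity))
    have h14 : C * (2 / cl) ≤ (2 / cl) * ((M + 1) * ∫ x, u x ∂f) := by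
      have h2cl : (0:ℝ) ≤ 2 / cl := by positivity
      calc C * (2 / cl) = (2 / cl) * C := mul_comm _ _
        _ ≤ (2 / cl) * ((M + 1) * ∫ x, u x ∂f) := mul_le_mul_of_nonneg_left hCle h2cl
    rw [hsplit]
    have h15 : (∫ x in A, u x * ‖x‖ ^ 2 ∂f) + ∫ x in Aᶜ, u x * ‖x‖ ^ 2 ∂f
        ≤ R2 * (∫ x, u x ∂f) + (2 / cl) * ((M + 1) * ∫ x, u x ∂f) := by
      have := hpartB.trans h14
      linarith [hpartA]
    refine h15.trans ?_
    have hb : R2 + (2 / cl) * (M + 1)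
        ≤ Rl ^ 2 + 4 * cu / cl + 2 / cl + (2 * cu / cl + 2 / cl) * M := by
      have heq : Rl ^ 2 + 2 * cu / cl * (2 + M) + (2 / cl) * (M + 1)
          = Rl ^ 2 + 4 * cu / cl + 2 / cl + (2 * cu / cl + 2 / cl) * M := by ring
      linarith
    calc R2 * (∫ x, u x ∂f) + (2 / cl) * ((M + 1) * ∫ x, u x ∂f)
        = (R2 + (2 / cl) * (M + 1)) * ∫ x, u x ∂f := by ring
      _ ≤ (Rl ^ 2 + 4 * cu / cl + 2 / cl + (2 * cu / cl + 2 / cl) * M) * ∫ x, u x ∂f :=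
          mul_le_mul_of_nonneg_right hb huI0
  -- final assembly
  set w : Ed d → ℝ := fun x => Real.exp (-α * E x) with hwdef
  set W : ℝ := Real.exp (-(α * E xstar)) with hWdef
  have hWpos : 0 < W := Real.exp_pos _
  have hwu : ∀ x, w x = W * u x := by
    intro x
    simp only [hwdef, hWdef, hudef, hgdef, ← Real.exp_add]
    congr 1; ring
  have hwc : Continuous w := by fun_prop
  have hwmeas : Measurable w := hwc.measurable
  have hwint : Integrable w f := by
    have hfe : w = fun x => W * u x := funext hwu
    rw [hfe]; exact huint.const_mul W
  have hw0 : 0 ≤ᵐ[f] w := Filter.Eventually.of_forall fun x => (Real.exp_pos _).le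
  have hZ : (∫⁻ x, ENNReal.ofReal (w x) ∂f) = ENNReal.ofReal (∫ x, w x ∂f) :=
    (ofReal_integral_eq_lintegral_ofReal hwint hw0).symm
  have hwd : ∫ x, ‖x‖ ^ 2 ∂(f.withDensity fun x => ENNReal.ofReal (w x))
      = ∫ x, w x * ‖x‖ ^ 2 ∂f := by
    have hofr : (fun x => ENNReal.ofReal (w x)) = fun x => ((w x).toNNReal : ENNReal) := rfl
    rw [hofr, integral_withDensity_eq_integral_smul (hwmeas.real_toNNReal)]
    refine integral_congr_ae (Filter.Eventually.of_forall fun x => ?_)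
    have hc : ((w x).toNNReal : ℝ) = w x := Real.coe_toNNReal _ (Real.exp_pos (-α * E x)).le
    simp [NNReal.smul_def, hc]
  have hgibbs : ∫ x, ‖x‖ ^ 2 ∂(gibbs E α f) = (∫ x, w x ∂f)⁻¹ * ∫ x, w x * ‖x‖ ^ 2 ∂f := by
    rw [gibbs, integral_smul_measure, hZ, ← hwdef, hwd, ENNReal.toReal_inv,
      ENNReal.toReal_ofReal (integral_nonneg fun x => (Real.exp_pos _).le)]
    simp only [smul_eq_mul]
    rfl
  have hI1 : ∫ x, w x ∂f = W * ∫ x, u x ∂f := by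
    rw [← integral_const_mul]
    exact integral_congr_ae (Filter.Eventually.of_forall fun x => hwu x)
  have hI2 : ∫ x, w x * ‖x‖ ^ 2 ∂f = W * ∫ x, u x * ‖x‖ ^ 2 ∂f := by
    rw [← integral_const_mul]
    refine integral_congr_ae (Filter.Eventually.of_forall fun x => ?_)
    show w x * ‖x‖ ^ 2 = W * (u x * ‖x‖ ^ 2)
    rw [hwu x]; ring
  rw [hgibbs, hI1, hI2]
  have hsimp : (W * ∫ x, u x ∂f)⁻¹ * (W * ∫ x, u x * ‖x‖ ^ 2 ∂f)
      = (∫ x, u x ∂f)⁻¹ * ∫ x, u x * ‖x‖ ^ 2 ∂f := by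
    field_simp
  rw [hsimp, inv_mul_le_iff₀ huIpos]
  exact hcore.trans_eq (mul_comm _ _)
end
end

section
/- Grönwall-type second moment estimate for the GA kinetic sequence: Let E : ℝ^d → ℝ be continuous and satisfy the growth conditions with global minimizer x⋆, let α > 1, f_(0) ∈ P_2(ℝ^d), and let (f_(k)) be the GA kinetic sequence with Boltzmann selection. Then there exist constants q_1, q_2 > 0 depending only on c_u, c_l, R_l, σ and d such that for all k ∈ ℕ, ∫ |x|² df_(k)(x) ≤ e^{kτ q_1} ∫ |x|² df_(0)(x) + (q_2/q_1)(e^{kτ q_1} − 1). -/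
open MeasureTheory ProbabilityTheory Real Set

noncomputable section

set_option maxHeartbeats 1600000

open scoped ENNReal NNReal

section Aux

lemma map_eval_pi' {ι : Type*} [Fintype ι] [DecidableEq ι] {α : ι → Type*}
    [∀ i, MeasurableSpace (α i)] (μ : ∀ i, Measure (α i)) [∀ i, IsProbabilityMeasure (μ i)]
    (i : ι) : Measure.map (Function.eval i) (Measure.pi μ) = μ i := by
  ext s hs
  rw [Measure.map_apply (measurable_pi_apply i) hs, Set.eval_preimage, Measure.pi_pi]
  rw [Finset.prod_eq_single i]
  · simp
  · intro j _ hj; simp [Function.update_of_ne hj]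
  · simp

lemma gauss_sq_le (t : ℝ) : gaussianPDFReal 0 1 t * t ^ 2 ≤ Real.exp (-(4⁻¹ : ℝ) * t ^ 2) := by
  rw [gaussianPDFReal]
  push_cast
  simp only [sub_zero, mul_one]
  have h4 : (4:ℝ) ≤ 2 * Real.pi := by nlinarith [Real.pi_gt_three]
  have h2pi : (2:ℝ) ≤ Real.sqrt (2 * Real.pi) := by
    calc (2:ℝ) = Real.sqrt 4 := by
          rw [show (4:ℝ) = 2^2 by norm_num, Real.sqrt_sq (by norm_num : (0:ℝ) ≤ 2)]
      _ ≤ _ := Real.sqrt_le_sqrt h4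
  have hs : (0:ℝ) < Real.sqrt (2 * Real.pi) := lt_of_lt_of_le two_pos h2pi
  have hkey : t ^ 2 ≤ 2 * Real.exp (4⁻¹ * t ^ 2) := by
    have h1 : t^2/8 + 1 ≤ Real.exp (t^2/8) := Real.add_one_le_exp _
    have h2 : Real.exp (t^2/8) * Real.exp (t^2/8) = Real.exp (4⁻¹ * t^2) := by
      rw [← Real.exp_add]; ring_nf
    nlinarith [Real.exp_pos (t^2/8), sq_nonneg (t^2/8 - 1)]
  have e1 : Real.exp (-(4⁻¹:ℝ) * t^2) * Real.exp (-(4⁻¹:ℝ)*t^2) = Real.exp (-t^2/2) := by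
    rw [← Real.exp_add]; ring_nf
  have hexp : Real.exp (4⁻¹*t^2) * Real.exp (-(4⁻¹:ℝ)*t^2) = 1 := by
    rw [← Real.exp_add, show (4⁻¹*t^2 + -(4⁻¹:ℝ)*t^2) = 0 by ring, Real.exp_zero]
  have e2 : t^2 * Real.exp (-(4⁻¹:ℝ)*t^2) ≤ 2 := by
    nlinarith [Real.exp_pos (-(4⁻¹:ℝ)*t^2)]
  have hinv : (Real.sqrt (2*Real.pi))⁻¹ ≤ 2⁻¹ := by
    exact inv_anti₀ two_pos h2pi
  have hpos : (0:ℝ) < (Real.sqrt (2*Real.pi))⁻¹ := by positivity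
  calc (Real.sqrt (2*Real.pi))⁻¹ * Real.exp (-t^2/2) * t^2
      = (Real.sqrt (2*Real.pi))⁻¹ * (t^2 * Real.exp (-(4⁻¹:ℝ)*t^2)) * Real.exp (-(4⁻¹:ℝ)*t^2) := by
        rw [← e1]; ring
    _ ≤ 2⁻¹ * 2 * Real.exp (-(4⁻¹:ℝ)*t^2) := by
        apply mul_le_mul_of_nonneg_right _ (Real.exp_pos _).le
        apply mul_le_mul hinv e2 (by positivity) (by norm_num)
    _ = Real.exp (-(4⁻¹:ℝ)*t^2) := by norm_num
    _ = Real.exp (-(4⁻¹:ℝ) * t^2) := rfl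

lemma lintegral_sq_gaussian : ∫⁻ t, ENNReal.ofReal (t^2) ∂(gaussianReal 0 1) ≤ ENNReal.ofReal 4 := by
  rw [gaussianReal_of_var_ne_zero 0 one_ne_zero]
  rw [lintegral_withDensity_eq_lintegral_mul _ (measurable_gaussianPDF 0 1) (by fun_prop)]
  have hle : ∀ t : ℝ, (gaussianPDF 0 1 * fun t => ENNReal.ofReal (t^2)) t
      ≤ ENNReal.ofReal (Real.exp (-(4⁻¹:ℝ) * t^2)) := by
    intro t
    simp only [Pi.mul_apply, gaussianPDF, ← ENNReal.ofReal_mul (gaussianPDFReal_nonneg 0 1 t)]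
    exact ENNReal.ofReal_le_ofReal (gauss_sq_le t)
  refine le_trans (lintegral_mono hle) ?_
  rw [← ofReal_integral_eq_lintegral_ofReal]
  · apply ENNReal.ofReal_le_ofReal
    rw [integral_gaussian]
    calc Real.sqrt (Real.pi / 4⁻¹) ≤ Real.sqrt 16 := by
          apply Real.sqrt_le_sqrt
          rw [show (Real.pi/4⁻¹ : ℝ) = 4*Real.pi by ring]
          nlinarith [Real.pi_le_four]
      _ = 4 := by rw [show (16:ℝ) = 4^2 by norm_num, Real.sqrt_sq (by norm_num : (0:ℝ) ≤ 4)]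
  · exact integrable_exp_neg_mul_sq (by norm_num)
  · exact Filter.Eventually.of_forall fun t => (Real.exp_pos _).le

lemma norm_sq_eq_sum {d : ℕ} (x : Ed d) : ‖x‖^2 = ∑ i, (x i)^2 := by
  rw [EuclideanSpace.norm_eq, Real.sq_sqrt (by positivity)]
  simp [sq_abs]

instance stdGaussian_prob (d : ℕ) : IsProbabilityMeasure (stdGaussian d) := by
  unfold _root_.stdGaussian
  exact Measure.isProbabilityMeasure_map
    (MeasurableEquiv.toLp 2 (Fin d → ℝ)).measurable.aemeasurable

lemma lintegral_sq_stdGaussian (d : ℕ) :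
    ∫⁻ ξ, ENNReal.ofReal (‖ξ‖^2) ∂(stdGaussian d) ≤ ENNReal.ofReal (4*d) := by
  rw [_root_.stdGaussian, lintegral_map (by fun_prop)
    (MeasurableEquiv.toLp 2 (Fin d → ℝ)).measurable]
  have h : ∀ y : Fin d → ℝ,
      ENNReal.ofReal (‖((MeasurableEquiv.toLp 2 (Fin d → ℝ)) y : Ed d)‖^2)
      = ∑ i, ENNReal.ofReal ((y i)^2) := by
    intro y
    rw [norm_sq_eq_sum, ENNReal.ofReal_sum_of_nonneg (fun i _ => by positivity)]
    rfl
  simp_rw [h]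
  rw [lintegral_finset_sum _ (fun i _ => by fun_prop)]
  calc ∑ i : Fin d, ∫⁻ y, ENNReal.ofReal ((y i)^2) ∂(Measure.pi fun _ => gaussianReal 0 1)
      ≤ ∑ _i : Fin d, ENNReal.ofReal 4 := by
        refine Finset.sum_le_sum fun i _ => ?_
        calc ∫⁻ y, ENNReal.ofReal ((y i)^2) ∂(Measure.pi fun _ => gaussianReal 0 1)
            = ∫⁻ t, ENNReal.ofReal (t^2)
              ∂(Measure.map (Function.eval i) (Measure.pi fun _ => gaussianReal 0 1)) :=
              (lintegral_map (f := fun t : ℝ => ENNReal.ofReal (t^2)) (by fun_prop)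
                (measurable_pi_apply i)).symm
          _ ≤ ENNReal.ofReal 4 := by rw [map_eval_pi']; exact lintegral_sq_gaussian
    _ = ENNReal.ofReal (4*d) := by
        rw [Finset.sum_const, Finset.card_univ, Fintype.card_fin, nsmul_eq_mul,
          ← ENNReal.ofReal_natCast, ← ENNReal.ofReal_mul (by positivity), mul_comm]

variable {d : ℕ} {E : Ed d → ℝ} {α : ℝ}

lemma Z_pos (hE : Continuous E) (f : Measure (Ed d)) [IsProbabilityMeasure f] :
    0 < ∫⁻ x, ENNReal.ofReal (Real.exp (-α * E x)) ∂f := by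
  rw [lintegral_pos_iff_support (by fun_prop)]
  have : (Function.support fun x => ENNReal.ofReal (Real.exp (-α * E x))) = Set.univ := by
    ext x; simp [Function.support, ENNReal.ofReal_eq_zero, not_le, Real.exp_pos]
  rw [this]; simp

lemma Z_ne_top (xstar : Ed d) (hmin : ∀ x, E xstar ≤ E x) (hα : 0 < α)
    (f : Measure (Ed d)) [IsProbabilityMeasure f] :
    ∫⁻ x, ENNReal.ofReal (Real.exp (-α * E x)) ∂f ≠ ⊤ := by
  refine ne_top_of_le_ne_top (b := ENNReal.ofReal (Real.exp (-α * E xstar)))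
    ENNReal.ofReal_ne_top ?_
  calc ∫⁻ x, ENNReal.ofReal (Real.exp (-α * E x)) ∂f
      ≤ ∫⁻ _, ENNReal.ofReal (Real.exp (-α * E xstar)) ∂f := by
        refine lintegral_mono fun x => ENNReal.ofReal_le_ofReal (Real.exp_le_exp.2 ?_)
        have := hmin x; nlinarith
    _ = ENNReal.ofReal (Real.exp (-α * E xstar)) := by simp

lemma gibbs_prob (hE : Continuous E) (xstar : Ed d) (hmin : ∀ x, E xstar ≤ E x) (hα : 0 < α)
    (f : Measure (Ed d)) [IsProbabilityMeasure f] : IsProbabilityMeasure (gibbs E α f) := by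
  constructor
  rw [gibbs, Measure.smul_apply, withDensity_apply _ MeasurableSet.univ, smul_eq_mul,
    setLIntegral_univ]
  exact ENNReal.inv_mul_cancel (Z_pos hE f).ne' (Z_ne_top xstar hmin hα f)

lemma lintegral_gibbs (hE : Continuous E) (f : Measure (Ed d)) {g : Ed d → ℝ≥0∞}
    (hg : Measurable g) :
    ∫⁻ x, g x ∂(gibbs E α f) = (∫⁻ x, ENNReal.ofReal (Real.exp (-α * E x)) ∂f)⁻¹ *
      ∫⁻ x, ENNReal.ofReal (Real.exp (-α * E x)) * g x ∂f := by
  rw [gibbs, lintegral_smul_measure,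
    lintegral_withDensity_eq_lintegral_mul _ (by fun_prop) hg]
  rfl

lemma decay_mono {a R t : ℝ} (ha : 1 ≤ a * R) (hRt : R ≤ t) (hR : 0 < R) :
    t * Real.exp (-(a * t)) ≤ R * Real.exp (-(a * R)) := by
  have h1 : a * (t - R) + 1 ≤ Real.exp (a * (t - R)) := Real.add_one_le_exp _
  have he : Real.exp (-(a * t)) * Real.exp (a * (t - R)) = Real.exp (-(a * R)) := by
    rw [← Real.exp_add]; ring_nf
  have hp := Real.exp_pos (-(a * t))
  have hX : t ≤ R * Real.exp (a * (t - R)) := by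
    have h2 := mul_le_mul_of_nonneg_left h1 hR.le
    nlinarith [mul_nonneg (sub_nonneg.2 hRt) (sub_nonneg.2 ha)]
  calc t * Real.exp (-(a * t)) ≤ (R * Real.exp (a * (t - R))) * Real.exp (-(a * t)) :=
        mul_le_mul_of_nonneg_right hX hp.le
    _ = R * Real.exp (-(a * R)) := by rw [← he]; ring

lemma gibbs_moment (hE : Continuous E) (xstar : Ed d) (hmin : ∀ x, E xstar ≤ E x)
    (cu cl Rl : ℝ) (hcu : 0 < cu) (hcl : 0 < cl) (hRl : 0 < Rl)
    (hgu : ∀ x, E x - E xstar ≤ cu * (1 + ‖x‖ ^ 2))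
    (hgl : ∀ x, Rl < ‖x‖ → cl * ‖x‖ ^ 2 ≤ E x - E xstar)
    (hα : 1 < α) (f : Measure (Ed d)) [IsProbabilityMeasure f]
    (M : ℝ) (hM : 0 ≤ M) (hfM : ∫⁻ x, ENNReal.ofReal (‖x‖ ^ 2) ∂f ≤ ENNReal.ofReal M) :
    ∫⁻ x, ENNReal.ofReal (‖x‖ ^ 2) ∂(gibbs E α f) ≤
      ENNReal.ofReal (2 * (Rl ^ 2 + 1 + 3 * (cu / cl) + 1 / cl) + 4 * (cu / cl) * M) := by
  have hα0 : (0:ℝ) < α := by linarith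
  set w : Ed d → ℝ := fun x => Real.exp (-α * (E x - E xstar)) with hw
  have hw_pos : ∀ x, 0 < w x := fun x => Real.exp_pos _
  have hw_le_one : ∀ x, w x ≤ 1 := by
    intro x
    rw [hw]
    simp only
    rw [show (1:ℝ) = Real.exp 0 by simp]
    apply Real.exp_le_exp.2
    have := hmin x; nlinarith
  have hwm : Measurable fun x => ENNReal.ofReal (w x) := by fun_prop
  set c : ℝ≥0∞ := ENNReal.ofReal (Real.exp (-α * E xstar)) with hc
  have hc0 : c ≠ 0 := by simp [hc, Real.exp_pos]
  have hctop : c ≠ ⊤ := ENNReal.ofReal_ne_top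
  have hfac : ∀ x, ENNReal.ofReal (Real.exp (-α * E x)) = c * ENNReal.ofReal (w x) := by
    intro x
    rw [hc, ← ENNReal.ofReal_mul (Real.exp_pos _).le, ← Real.exp_add]
    congr 1
    ring
  set Zw := ∫⁻ x, ENNReal.ofReal (w x) ∂f with hZw
  set Nw := ∫⁻ x, ENNReal.ofReal (w x) * ENNReal.ofReal (‖x‖ ^ 2) ∂f with hNw
  have hmain : ∫⁻ x, ENNReal.ofReal (‖x‖ ^ 2) ∂(gibbs E α f) = Zw⁻¹ * Nw := by
    rw [lintegral_gibbs hE f (by fun_prop)]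
    simp_rw [hfac]
    rw [lintegral_const_mul c hwm]
    simp_rw [mul_assoc]
    rw [lintegral_const_mul c (by fun_prop)]
    have cancel : ∀ A B : ℝ≥0∞, c⁻¹ * A * (c * B) = A * B := by
      intro A B
      rw [mul_comm c⁻¹ A, mul_assoc, ← mul_assoc c⁻¹, ENNReal.inv_mul_cancel hc0 hctop, one_mul]
    rw [ENNReal.mul_inv (Or.inl hc0) (Or.inl hctop), cancel]
  rw [hmain]
  -- constants
  set ε : ℝ := Real.exp (-(α * (cu * (3 + 2 * M)))) with hε
  have hε_pos : 0 < ε := Real.exp_pos _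
  set R2 : ℝ := Rl ^ 2 + 1 + (cu / cl) * (3 + 2 * M) + 1 / cl with hR2
  have hR2_pos : 0 < R2 := by positivity
  have hR2_ge : 1 / cl ≤ R2 := by nlinarith [mul_nonneg (div_nonneg hcu.le hcl.le) (by linarith : (0:ℝ) ≤ 3 + 2*M)]
  -- Step A : lower bound on Zw
  set S : Set (Ed d) := {x | ‖x‖ ^ 2 ≤ 2 * (M + 1)} with hS
  have hSm : MeasurableSet S := measurableSet_le (by fun_prop) measurable_const
  have hScompl : f Sᶜ ≤ ENNReal.ofReal (1 / 2) := by
    have ha0 : ENNReal.ofReal (2 * (M + 1)) ≠ 0 := by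
      simp only [ne_eq, ENNReal.ofReal_eq_zero, not_le]
      linarith
    have hatop : ENNReal.ofReal (2 * (M + 1)) ≠ ⊤ := ENNReal.ofReal_ne_top
    have hmark := mul_meas_ge_le_lintegral₀ (μ := f)
      (f := fun x => ENNReal.ofReal (‖x‖ ^ 2)) (by fun_prop) (ENNReal.ofReal (2 * (M + 1)))
    have hsub : f Sᶜ ≤ f {x | ENNReal.ofReal (2 * (M + 1)) ≤ ENNReal.ofReal (‖x‖ ^ 2)} := by
      apply measure_mono
      intro x hx
      simp only [hS, Set.mem_compl_iff, Set.mem_setOf_eq, not_le] at hx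
      exact ENNReal.ofReal_le_ofReal hx.le
    have h2 : ENNReal.ofReal (2 * (M + 1)) * f Sᶜ ≤ ENNReal.ofReal M :=
      le_trans (mul_le_mul_right hsub _) (le_trans hmark hfM)
    have h2' : f Sᶜ * ENNReal.ofReal (2 * (M + 1)) ≤ ENNReal.ofReal M := by
      rwa [mul_comm] at h2
    have h3 : f Sᶜ ≤ ENNReal.ofReal M / ENNReal.ofReal (2 * (M + 1)) :=
      (ENNReal.le_div_iff_mul_le (Or.inl ha0) (Or.inl hatop)).2 h2'
    refine le_trans h3 ?_
    rw [← ENNReal.ofReal_div_of_pos (by linarith)]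
    apply ENNReal.ofReal_le_ofReal
    rw [div_le_div_iff₀ (by linarith) (by norm_num)]
    linarith
  have hfS : ENNReal.ofReal (1 / 2) ≤ f S := by
    have hsum : f S + f Sᶜ = 1 := by
      rw [measure_add_measure_compl hSm, measure_univ]
    have h1 : (1 : ℝ≥0∞) - ENNReal.ofReal (1 / 2) = ENNReal.ofReal (1 / 2) := by
      rw [← ENNReal.ofReal_one, ← ENNReal.ofReal_sub _ (by norm_num)]
      norm_num
    calc ENNReal.ofReal (1 / 2) = 1 - ENNReal.ofReal (1 / 2) := h1.symm
      _ ≤ 1 - f Sᶜ := tsub_le_tsub_left hScompl 1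
      _ = f S + f Sᶜ - f Sᶜ := by rw [hsum]
      _ = f S := ENNReal.add_sub_cancel_right (measure_ne_top f _)
  have hZw_lb : ENNReal.ofReal (ε * (1 / 2)) ≤ Zw := by
    have hptwise : ∀ x ∈ S, ENNReal.ofReal ε ≤ ENNReal.ofReal (w x) := by
      intro x hx
      apply ENNReal.ofReal_le_ofReal
      have h2 : ‖x‖ ^ 2 ≤ 2 * (M + 1) := hx
      apply Real.exp_le_exp.2
      have h1 := hgu x
      have h3 : E x - E xstar ≤ cu * (3 + 2 * M) := by nlinarith
      nlinarith [mul_le_mul_of_nonneg_left h3 hα0.le]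
    calc ENNReal.ofReal (ε * (1 / 2)) = ENNReal.ofReal ε * ENNReal.ofReal (1 / 2) :=
          ENNReal.ofReal_mul hε_pos.le
      _ ≤ ENNReal.ofReal ε * f S := mul_le_mul_right hfS _
      _ = ∫⁻ _ in S, ENNReal.ofReal ε ∂f := (setLIntegral_const S _).symm
      _ ≤ ∫⁻ x in S, ENNReal.ofReal (w x) ∂f := setLIntegral_mono hwm hptwise
      _ ≤ Zw := setLIntegral_le_lintegral S _
  have hZw0 : Zw ≠ 0 := by
    intro h
    rw [h] at hZw_lb
    rw [le_zero_iff, ENNReal.ofReal_eq_zero] at hZw_lb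
    nlinarith
  have hZwtop : Zw ≠ ⊤ := by
    refine ne_top_of_le_ne_top (b := 1) ENNReal.one_ne_top ?_
    calc Zw ≤ ∫⁻ _, 1 ∂f := lintegral_mono fun x => ENNReal.ofReal_le_one.2 (hw_le_one x)
      _ = 1 := by simp
  -- Step B : upper bound on Nw
  have hhalf : Real.exp (-(α * cl * R2)) ≤ ε * (1 / 2) := by
    have e1 : cl * ((cu / cl) * (3 + 2 * M)) = cu * (3 + 2 * M) := by field_simp
    have e2 : cl * (1 / cl) = 1 := by field_simp
    have hD : cu * (3 + 2 * M) + 1 ≤ cl * R2 := by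
      rw [hR2]
      nlinarith [sq_nonneg Rl, hcl.le]
    have hDge1 : 1 ≤ cl * R2 - cu * (3 + 2 * M) := by linarith
    have h2exp : (2 : ℝ) ≤ Real.exp (α * (cl * R2 - cu * (3 + 2 * M))) := by
      have hm : α * 1 ≤ α * (cl * R2 - cu * (3 + 2 * M)) :=
        mul_le_mul_of_nonneg_left hDge1 hα0.le
      linarith [Real.add_one_le_exp (α * (cl * R2 - cu * (3 + 2 * M)))]
    have hprod : Real.exp (-(α * cl * R2)) * Real.exp (α * (cl * R2 - cu * (3 + 2 * M)))
        = ε := by rw [hε, ← Real.exp_add]; ring_nf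
    nlinarith [Real.exp_pos (-(α * cl * R2)),
      mul_nonneg (Real.exp_pos (-(α * cl * R2))).le
        (by linarith : (0:ℝ) ≤ Real.exp (α * (cl * R2 - cu * (3 + 2 * M))) - 2)]
  set T : Set (Ed d) := {x | ‖x‖ ^ 2 ≤ R2} with hT
  have hTm : MeasurableSet T := measurableSet_le (by fun_prop) measurable_const
  have hT_bound : ∫⁻ x in T, ENNReal.ofReal (w x) * ENNReal.ofReal (‖x‖ ^ 2) ∂f
      ≤ ENNReal.ofReal R2 * Zw := by
    calc ∫⁻ x in T, ENNReal.ofReal (w x) * ENNReal.ofReal (‖x‖ ^ 2) ∂f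
        ≤ ∫⁻ x in T, ENNReal.ofReal (w x) * ENNReal.ofReal R2 ∂f := by
          refine setLIntegral_mono (by fun_prop) ?_
          intro x hx
          exact mul_le_mul_right (ENNReal.ofReal_le_ofReal hx) _
      _ = (∫⁻ x in T, ENNReal.ofReal (w x) ∂f) * ENNReal.ofReal R2 :=
          lintegral_mul_const' _ _ ENNReal.ofReal_ne_top
      _ ≤ Zw * ENNReal.ofReal R2 := mul_le_mul_left (setLIntegral_le_lintegral _ _) _
      _ = ENNReal.ofReal R2 * Zw := mul_comm _ _
  have hTc_bound : ∫⁻ x in Tᶜ, ENNReal.ofReal (w x) * ENNReal.ofReal (‖x‖ ^ 2) ∂f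
      ≤ ENNReal.ofReal R2 * Zw := by
    have hpt : ∀ x ∈ Tᶜ,
        ENNReal.ofReal (w x) * ENNReal.ofReal (‖x‖ ^ 2)
          ≤ ENNReal.ofReal (R2 * (ε * (1 / 2))) := by
      intro x hx
      simp only [hT, Set.mem_compl_iff, Set.mem_setOf_eq, not_le] at hx
      have hxRl : Rl < ‖x‖ := by
        by_contra hcon
        push_neg at hcon
        have hle : ‖x‖ ^ 2 ≤ Rl ^ 2 := pow_le_pow_left₀ (norm_nonneg x) hcon 2
        have hnn : 0 ≤ cu / cl * (3 + 2 * M) := by positivity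
        have h1cl : 0 < 1 / cl := by positivity
        rw [hR2] at hx
        linarith
      have hw_le : w x ≤ Real.exp (-(α * cl * ‖x‖ ^ 2)) := by
        apply Real.exp_le_exp.2
        have hg := hgl x hxRl
        nlinarith [mul_le_mul_of_nonneg_left hg hα0.le]
      have haR : 1 ≤ α * cl * R2 := by
        have hm : cl * (1 / cl) ≤ cl * R2 := mul_le_mul_of_nonneg_left hR2_ge hcl.le
        have e2 : cl * (1 / cl) = 1 := by field_simp
        nlinarith [mul_le_mul_of_nonneg_left (e2 ▸ hm : (1:ℝ) ≤ cl * R2) hα0.le]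
      have hdec : ‖x‖ ^ 2 * Real.exp (-(α * cl * ‖x‖ ^ 2))
          ≤ R2 * Real.exp (-(α * cl * R2)) :=
        decay_mono haR hx.le hR2_pos
      rw [← ENNReal.ofReal_mul (hw_pos x).le]
      apply ENNReal.ofReal_le_ofReal
      calc w x * ‖x‖ ^ 2 ≤ Real.exp (-(α * cl * ‖x‖ ^ 2)) * ‖x‖ ^ 2 :=
            mul_le_mul_of_nonneg_right hw_le (by positivity)
        _ = ‖x‖ ^ 2 * Real.exp (-(α * cl * ‖x‖ ^ 2)) := mul_comm _ _
        _ ≤ R2 * Real.exp (-(α * cl * R2)) := hdec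
        _ ≤ R2 * (ε * (1 / 2)) := mul_le_mul_of_nonneg_left hhalf hR2_pos.le
    calc ∫⁻ x in Tᶜ, ENNReal.ofReal (w x) * ENNReal.ofReal (‖x‖ ^ 2) ∂f
        ≤ ∫⁻ _ in Tᶜ, ENNReal.ofReal (R2 * (ε * (1 / 2))) ∂f :=
          setLIntegral_mono measurable_const hpt
      _ = ENNReal.ofReal (R2 * (ε * (1 / 2))) * f Tᶜ := setLIntegral_const _ _
      _ ≤ ENNReal.ofReal (R2 * (ε * (1 / 2))) * 1 := mul_le_mul_right prob_le_one _
      _ = ENNReal.ofReal R2 * ENNReal.ofReal (ε * (1 / 2)) := by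
          rw [mul_one, ENNReal.ofReal_mul hR2_pos.le]
      _ ≤ ENNReal.ofReal R2 * Zw := mul_le_mul_right hZw_lb _
  have hNw_le : Nw ≤ ENNReal.ofReal (2 * R2) * Zw := by
    calc Nw = (∫⁻ x in T, ENNReal.ofReal (w x) * ENNReal.ofReal (‖x‖ ^ 2) ∂f)
          + ∫⁻ x in Tᶜ, ENNReal.ofReal (w x) * ENNReal.ofReal (‖x‖ ^ 2) ∂f :=
          (lintegral_add_compl _ hTm).symm
      _ ≤ ENNReal.ofReal R2 * Zw + ENNReal.ofReal R2 * Zw := add_le_add hT_bound hTc_bound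
      _ = ENNReal.ofReal (2 * R2) * Zw := by
          rw [← two_mul, ← mul_assoc, show (2 : ℝ≥0∞) = ENNReal.ofReal 2 by simp,
            ← ENNReal.ofReal_mul (by norm_num)]
  calc Zw⁻¹ * Nw ≤ Zw⁻¹ * (ENNReal.ofReal (2 * R2) * Zw) := mul_le_mul_right hNw_le _
    _ = ENNReal.ofReal (2 * R2) * (Zw⁻¹ * Zw) := by ring
    _ = ENNReal.ofReal (2 * R2) := by rw [ENNReal.inv_mul_cancel hZw0 hZwtop, mul_one]
    _ ≤ ENNReal.ofReal (2 * (Rl ^ 2 + 1 + 3 * (cu / cl) + 1 / cl) + 4 * (cu / cl) * M) :=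
        le_of_eq (by rw [hR2]; ring_nf)


lemma coll_measurable {d : ℕ} (γ : Fin d → ℝ) (σ : ℝ) :
    Measurable (fun p : (Ed d × Ed d) × Ed d => coll γ σ p.1.1 p.1.2 p.2) := by
  have h : ∀ i : Fin d, Measurable (fun p : (Ed d × Ed d) × Ed d =>
      (1 - γ i) * p.1.1 i + γ i * p.1.2 i + σ * p.2 i) := by
    intro i
    have hc : Measurable (fun x : Ed d => x i) :=
      (measurable_pi_apply i).comp (MeasurableEquiv.toLp 2 (Fin d → ℝ)).symm.measurable
    have h1 : Measurable (fun p : (Ed d × Ed d) × Ed d => p.1.1 i) :=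
      hc.comp (measurable_fst.comp measurable_fst)
    have h2 : Measurable (fun p : (Ed d × Ed d) × Ed d => p.1.2 i) :=
      hc.comp (measurable_snd.comp measurable_fst)
    have h3 : Measurable (fun p : (Ed d × Ed d) × Ed d => p.2 i) :=
      hc.comp measurable_snd
    exact ((h1.const_mul _).add (h2.const_mul _)).add (h3.const_mul _)
  exact (MeasurableEquiv.toLp 2 (Fin d → ℝ)).measurable.comp
    (measurable_pi_lambda _ h)

lemma coll_norm_sq_le {d : ℕ} (γ : Fin d → ℝ) (hγ : ∀ i, γ i ∈ Set.Icc (0:ℝ) 1) (σ : ℝ)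
    (x xs ξ : Ed d) :
    ‖coll γ σ x xs ξ‖^2 ≤ 3*‖x‖^2 + (3*‖xs‖^2 + 3*σ^2*‖ξ‖^2) := by
  rw [norm_sq_eq_sum (coll γ σ x xs ξ), norm_sq_eq_sum x, norm_sq_eq_sum xs,
    norm_sq_eq_sum ξ, Finset.mul_sum, Finset.mul_sum, Finset.mul_sum,
    ← Finset.sum_add_distrib, ← Finset.sum_add_distrib]
  refine Finset.sum_le_sum fun i _ => ?_
  have h1 := (hγ i).1
  have h2 := (hγ i).2
  show ((1 - γ i) * x i + γ i * xs i + σ * ξ i)^2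
      ≤ 3*(x i)^2 + (3*(xs i)^2 + 3*σ^2*(ξ i)^2)
  have h3 : ((1 - γ i) * x i + γ i * xs i + σ * ξ i)^2
      ≤ 3*(((1 - γ i) * x i)^2 + (γ i * xs i)^2 + (σ * ξ i)^2) := by
    nlinarith [sq_nonneg ((1 - γ i) * x i - γ i * xs i),
      sq_nonneg ((1 - γ i) * x i - σ * ξ i), sq_nonneg (γ i * xs i - σ * ξ i)]
  have ha : ((1 - γ i) * x i)^2 ≤ (x i)^2 := by
    have hle : (1 - γ i)^2 ≤ 1 := by nlinarith
    calc ((1 - γ i) * x i)^2 = (1 - γ i)^2 * (x i)^2 := by ring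
      _ ≤ 1 * (x i)^2 := mul_le_mul_of_nonneg_right hle (sq_nonneg _)
      _ = (x i)^2 := one_mul _
  have hb : (γ i * xs i)^2 ≤ (xs i)^2 := by
    have hle : (γ i)^2 ≤ 1 := by nlinarith
    calc (γ i * xs i)^2 = (γ i)^2 * (xs i)^2 := by ring
      _ ≤ 1 * (xs i)^2 := mul_le_mul_of_nonneg_right hle (sq_nonneg _)
      _ = (xs i)^2 := one_mul _
  have hcσ : (σ * ξ i)^2 = σ^2 * (ξ i)^2 := by ring
  nlinarith

lemma lintegral_fst_prod {X Y : Type*} [MeasurableSpace X] [MeasurableSpace Y]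
    (ρ : Measure X) (ν : Measure Y) [SFinite ρ] [SFinite ν] [IsProbabilityMeasure ν]
    {g : X → ℝ≥0∞} (hg : Measurable g) :
    ∫⁻ p, g p.1 ∂(ρ.prod ν) = ∫⁻ x, g x ∂ρ := by
  rw [← lintegral_map hg measurable_fst, Measure.map_fst_prod, measure_univ, one_smul]

lemma lintegral_snd_prod {X Y : Type*} [MeasurableSpace X] [MeasurableSpace Y]
    (ρ : Measure X) (ν : Measure Y) [SFinite ρ] [SFinite ν] [IsProbabilityMeasure ρ]
    {g : Y → ℝ≥0∞} (hg : Measurable g) :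
    ∫⁻ p, g p.2 ∂(ρ.prod ν) = ∫⁻ y, g y ∂ν := by
  rw [← lintegral_map hg measurable_snd, Measure.map_snd_prod, measure_univ, one_smul]

lemma gaStep_prob (hE : Continuous E) (xstar : Ed d) (hmin : ∀ x, E xstar ≤ E x) (hα : 0 < α)
    {τ : ℝ} (hτ0 : 0 ≤ τ) (hτ1 : τ ≤ 1) (σ : ℝ) (γ : Fin d → ℝ)
    (f : Measure (Ed d)) [IsProbabilityMeasure f] :
    IsProbabilityMeasure (gaStep E α τ σ γ f) := by
  haveI := gibbs_prob hE xstar hmin hα f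
  constructor
  rw [gaStep]
  simp only [Measure.add_apply, Measure.smul_apply, smul_eq_mul]
  rw [Measure.map_apply (coll_measurable γ σ) MeasurableSet.univ]
  simp only [Set.preimage_univ, measure_univ, mul_one]
  rw [← ENNReal.ofReal_add (by linarith) hτ0]
  norm_num

lemma gaStep_moment (hE : Continuous E) (xstar : Ed d) (hmin : ∀ x, E xstar ≤ E x)
    (cu cl Rl : ℝ) (hcu : 0 < cu) (hcl : 0 < cl) (hRl : 0 < Rl)
    (hgu : ∀ x, E x - E xstar ≤ cu * (1 + ‖x‖ ^ 2))
    (hgl : ∀ x, Rl < ‖x‖ → cl * ‖x‖ ^ 2 ≤ E x - E xstar)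
    (hα : 1 < α) {τ : ℝ} (σ : ℝ) (hτ0 : 0 ≤ τ) (hτ1 : τ ≤ 1)
    (γ : Fin d → ℝ) (hγ : ∀ i, γ i ∈ Set.Icc (0:ℝ) 1)
    (f : Measure (Ed d)) [IsProbabilityMeasure f] (M : ℝ) (hM : 0 ≤ M)
    (hfM : ∫⁻ x, ENNReal.ofReal (‖x‖ ^ 2) ∂f ≤ ENNReal.ofReal M) :
    ∫⁻ x, ENNReal.ofReal (‖x‖ ^ 2) ∂(gaStep E α τ σ γ f) ≤
      ENNReal.ofReal ((1 - τ) * M +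
        τ * (6 * (2 * (Rl ^ 2 + 1 + 3 * (cu / cl) + 1 / cl) + 4 * (cu / cl) * M)
          + 12 * σ ^ 2 * d)) := by
  have hα0 : (0:ℝ) < α := by linarith
  haveI := gibbs_prob hE xstar hmin hα0 f
  set K : ℝ := 2 * (Rl ^ 2 + 1 + 3 * (cu / cl) + 1 / cl) + 4 * (cu / cl) * M with hK
  have hKnn : 0 ≤ K := by
    have h1 : 0 < cu / cl := div_pos hcu hcl
    have h2 : 0 < 1 / cl := by positivity
    rw [hK]
    nlinarith [sq_nonneg Rl, mul_nonneg (mul_nonneg (by norm_num : (0:ℝ) ≤ 4) h1.le) hM]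
  have hgibbs : ∫⁻ x, ENNReal.ofReal (‖x‖ ^ 2) ∂(gibbs E α f) ≤ ENNReal.ofReal K :=
    gibbs_moment hE xstar hmin cu cl Rl hcu hcl hRl hgu hgl hα f M hM hfM
  set η := gibbs E α f with hη
  have hmap : ∫⁻ x, ENNReal.ofReal (‖x‖ ^ 2)
      ∂(Measure.map (fun p : (Ed d × Ed d) × Ed d => coll γ σ p.1.1 p.1.2 p.2)
        ((η.prod η).prod (stdGaussian d)))
      ≤ ENNReal.ofReal (3*K + (3*K + 3*σ^2*(4*d))) := by
    rw [lintegral_map (by fun_prop) (coll_measurable γ σ)]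
    have hmono : ∀ p : (Ed d × Ed d) × Ed d,
        ENNReal.ofReal (‖coll γ σ p.1.1 p.1.2 p.2‖ ^ 2) ≤
          ENNReal.ofReal (3*‖p.1.1‖^2) + (ENNReal.ofReal (3*‖p.1.2‖^2)
            + ENNReal.ofReal (3*σ^2*‖p.2‖^2)) := by
      intro p
      rw [← ENNReal.ofReal_add (by positivity) (by positivity),
        ← ENNReal.ofReal_add (by positivity) (by positivity)]
      exact ENNReal.ofReal_le_ofReal (coll_norm_sq_le γ hγ σ _ _ _)
    have hmA : Measurable (fun p : (Ed d × Ed d) × Ed d => ENNReal.ofReal (3*‖p.1.1‖^2)) := by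
      fun_prop
    have hmB : Measurable (fun p : (Ed d × Ed d) × Ed d => ENNReal.ofReal (3*‖p.1.2‖^2)) := by
      fun_prop
    calc ∫⁻ p, ENNReal.ofReal (‖coll γ σ p.1.1 p.1.2 p.2‖ ^ 2) ∂((η.prod η).prod (stdGaussian d))
        ≤ ∫⁻ p, (ENNReal.ofReal (3*‖p.1.1‖^2) + (ENNReal.ofReal (3*‖p.1.2‖^2)
            + ENNReal.ofReal (3*σ^2*‖p.2‖^2))) ∂((η.prod η).prod (stdGaussian d)) :=
          lintegral_mono hmono
      _ = (∫⁻ p, ENNReal.ofReal (3*‖p.1.1‖^2) ∂((η.prod η).prod (stdGaussian d)))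
          + ((∫⁻ p, ENNReal.ofReal (3*‖p.1.2‖^2) ∂((η.prod η).prod (stdGaussian d)))
          + ∫⁻ p, ENNReal.ofReal (3*σ^2*‖p.2‖^2) ∂((η.prod η).prod (stdGaussian d))) := by
          rw [lintegral_add_left hmA, lintegral_add_left hmB]
      _ ≤ ENNReal.ofReal (3*K) + (ENNReal.ofReal (3*K) + ENNReal.ofReal (3*σ^2*(4*d))) := by
          have hA : ∫⁻ p, ENNReal.ofReal (3*‖p.1.1‖^2) ∂((η.prod η).prod (stdGaussian d))
              = ∫⁻ x, ENNReal.ofReal (3*‖x‖^2) ∂η := by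
            rw [lintegral_fst_prod (η.prod η) (stdGaussian d)
              (g := fun q : Ed d × Ed d => ENNReal.ofReal (3*‖q.1‖^2)) (by fun_prop),
              lintegral_fst_prod η η (g := fun x : Ed d => ENNReal.ofReal (3*‖x‖^2)) (by fun_prop)]
          have hB : ∫⁻ p, ENNReal.ofReal (3*‖p.1.2‖^2) ∂((η.prod η).prod (stdGaussian d))
              = ∫⁻ x, ENNReal.ofReal (3*‖x‖^2) ∂η := by
            rw [lintegral_fst_prod (η.prod η) (stdGaussian d)
              (g := fun q : Ed d × Ed d => ENNReal.ofReal (3*‖q.2‖^2)) (by fun_prop),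
              lintegral_snd_prod η η (g := fun x : Ed d => ENNReal.ofReal (3*‖x‖^2)) (by fun_prop)]
          have hC : ∫⁻ p, ENNReal.ofReal (3*σ^2*‖p.2‖^2) ∂((η.prod η).prod (stdGaussian d))
              = ∫⁻ ξ, ENNReal.ofReal (3*σ^2*‖ξ‖^2) ∂(stdGaussian d) :=
            lintegral_snd_prod (η.prod η) (stdGaussian d)
              (g := fun ξ : Ed d => ENNReal.ofReal (3*σ^2*‖ξ‖^2)) (by fun_prop)
          have hηK : ∫⁻ x, ENNReal.ofReal (3*‖x‖^2) ∂η ≤ ENNReal.ofReal (3*K) := by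
            calc ∫⁻ x, ENNReal.ofReal (3*‖x‖^2) ∂η
                = ENNReal.ofReal 3 * ∫⁻ x, ENNReal.ofReal (‖x‖^2) ∂η := by
                  rw [← lintegral_const_mul _ (by fun_prop)]
                  congr 1
                  ext x
                  rw [← ENNReal.ofReal_mul (by norm_num)]
              _ ≤ ENNReal.ofReal 3 * ENNReal.ofReal K := mul_le_mul_right hgibbs _
              _ = ENNReal.ofReal (3*K) := (ENNReal.ofReal_mul (by norm_num)).symm
          have hGK : ∫⁻ ξ, ENNReal.ofReal (3*σ^2*‖ξ‖^2) ∂(stdGaussian d)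
              ≤ ENNReal.ofReal (3*σ^2*(4*d)) := by
            calc ∫⁻ ξ, ENNReal.ofReal (3*σ^2*‖ξ‖^2) ∂(stdGaussian d)
                = ENNReal.ofReal (3*σ^2) * ∫⁻ ξ, ENNReal.ofReal (‖ξ‖^2) ∂(stdGaussian d) := by
                  rw [← lintegral_const_mul _ (by fun_prop)]
                  congr 1
                  ext ξ
                  rw [← ENNReal.ofReal_mul (by positivity), mul_assoc]
              _ ≤ ENNReal.ofReal (3*σ^2) * ENNReal.ofReal (4*d) :=
                  mul_le_mul_right (lintegral_sq_stdGaussian d) _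
              _ = ENNReal.ofReal (3*σ^2*(4*d)) := (ENNReal.ofReal_mul (by positivity)).symm
          rw [hA, hB, hC]
          exact add_le_add hηK (add_le_add hηK hGK)
      _ = ENNReal.ofReal (3*K + (3*K + 3*σ^2*(4*d))) := by
          rw [← ENNReal.ofReal_add (by positivity) (by positivity),
            ← ENNReal.ofReal_add (by positivity) (by positivity)]
  calc ∫⁻ x, ENNReal.ofReal (‖x‖ ^ 2) ∂(gaStep E α τ σ γ f)
      = ENNReal.ofReal (1-τ) * ∫⁻ x, ENNReal.ofReal (‖x‖ ^ 2) ∂f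
        + ENNReal.ofReal τ * ∫⁻ x, ENNReal.ofReal (‖x‖ ^ 2)
          ∂(Measure.map (fun p : (Ed d × Ed d) × Ed d => coll γ σ p.1.1 p.1.2 p.2)
            ((η.prod η).prod (stdGaussian d))) := by
        rw [gaStep, lintegral_add_measure, lintegral_smul_measure, lintegral_smul_measure,
          smul_eq_mul, smul_eq_mul]
    _ ≤ ENNReal.ofReal (1-τ) * ENNReal.ofReal M
        + ENNReal.ofReal τ * ENNReal.ofReal (3*K + (3*K + 3*σ^2*(4*d))) :=
        add_le_add (mul_le_mul_right hfM _) (mul_le_mul_right hmap _)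
    _ = ENNReal.ofReal ((1-τ)*M + τ*(3*K + (3*K + 3*σ^2*(4*d)))) := by
        rw [← ENNReal.ofReal_mul (by linarith), ← ENNReal.ofReal_mul hτ0,
          ← ENNReal.ofReal_add (by nlinarith) (by positivity)]
    _ ≤ _ := ENNReal.ofReal_le_ofReal (le_of_eq (by rw [hK]; ring))

end Aux

/-- **Grönwall-type second moment estimate for the GA kinetic sequence.**
There exist `q₁, q₂ > 0` (depending only on `c_u, c_l, R_l, σ, d`) such that
`∫ |x|² df_(k) ≤ e^{kτq₁} ∫ |x|² df₀ + (q₂/q₁)(e^{kτq₁} - 1)` for all `k`. -/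
theorem ga_second_moment_gronwall
    {d : ℕ} (hd : 1 ≤ d) (E : Ed d → ℝ) (hE : Continuous E)
    (xstar : Ed d) (hmin : ∀ x, E xstar ≤ E x)
    (cu cl Rl : ℝ) (hcu : 0 < cu) (hcl : 0 < cl) (hRl : 0 < Rl)
    (hgu : ∀ x, E x - E xstar ≤ cu * (1 + ‖x‖ ^ 2))
    (hgl : ∀ x, Rl < ‖x‖ → cl * ‖x‖ ^ 2 ≤ E x - E xstar)
    (α : ℝ) (hα : 1 < α)
    (τ : ℝ) (hτ : τ ∈ Set.Ioc (0 : ℝ) 1)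
    (γ : Fin d → ℝ) (hγ : ∀ i, γ i ∈ Set.Icc (0 : ℝ) 1)
    (σ : ℝ) (hσ : 0 < σ)
    (f0 : Measure (Ed d)) [IsProbabilityMeasure f0]
    (hf0mom : Integrable (fun x => ‖x‖ ^ 2) f0) :
    ∃ q₁ > (0 : ℝ), ∃ q₂ > (0 : ℝ), ∀ k : ℕ,
      ∫ x, ‖x‖ ^ 2 ∂(gaSeq E α τ σ γ f0 k) ≤
        Real.exp ((k : ℝ) * τ * q₁) * (∫ x, ‖x‖ ^ 2 ∂f0) +
          (q₂ / q₁) * (Real.exp ((k : ℝ) * τ * q₁) - 1) := by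
  obtain ⟨hτ0, hτ1⟩ := hτ
  have hα0 : (0:ℝ) < α := by linarith
  have hcucl : 0 < cu / cl := div_pos hcu hcl
  have h1cl : 0 < 1 / cl := by positivity
  set a : ℝ := 2 * (Rl ^ 2 + 1 + 3 * (cu / cl) + 1 / cl) with ha
  set b : ℝ := 4 * (cu / cl) with hb
  have hapos : 0 < a := by rw [ha]; nlinarith [sq_nonneg Rl]
  have hbpos : 0 < b := by rw [hb]; nlinarith
  refine ⟨6 * b, by linarith, 6 * a + 12 * σ ^ 2 * d, ?_, ?_⟩
  · have : (0:ℝ) ≤ 12 * σ ^ 2 * d := by positivity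
    linarith
  set q1 : ℝ := 6 * b with hq1
  set q2 : ℝ := 6 * a + 12 * σ ^ 2 * d with hq2
  have hq1pos : 0 < q1 := by rw [hq1]; linarith
  have hq2pos : 0 < q2 := by
    have : (0:ℝ) ≤ 12 * σ ^ 2 * d := by positivity
    rw [hq2]; linarith
  have hr : 0 ≤ q2 / q1 := by positivity
  have hrq : q2 / q1 * q1 = q2 := div_mul_cancel₀ q2 hq1pos.ne'
  set M0 : ℝ := ∫ x, ‖x‖ ^ 2 ∂f0 with hM0
  have hM0nn : 0 ≤ M0 := integral_nonneg fun x => by positivity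
  set A : ℕ → ℝ := fun k => Real.exp ((k : ℝ) * τ * q1) * M0
    + q2 / q1 * (Real.exp ((k : ℝ) * τ * q1) - 1) with hA
  have hAnn : ∀ k, 0 ≤ A k := by
    intro k
    have h1 : (1:ℝ) ≤ Real.exp ((k : ℝ) * τ * q1) := by
      rw [show (1:ℝ) = Real.exp 0 by simp]
      apply Real.exp_le_exp.2
      positivity
    have h2 := Real.exp_pos ((k : ℝ) * τ * q1)
    rw [hA]
    simp only
    nlinarith [mul_nonneg hr (by linarith : (0:ℝ) ≤ Real.exp ((k : ℝ) * τ * q1) - 1)]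
  have key : ∀ k : ℕ, IsProbabilityMeasure (gaSeq E α τ σ γ f0 k) ∧
      ∫⁻ x, ENNReal.ofReal (‖x‖ ^ 2) ∂(gaSeq E α τ σ γ f0 k) ≤ ENNReal.ofReal (A k) := by
    intro k
    induction k with
    | zero =>
      refine ⟨by rw [gaSeq]; infer_instance, ?_⟩
      have h0 : ∫⁻ x, ENNReal.ofReal (‖x‖ ^ 2) ∂f0 = ENNReal.ofReal M0 :=
        (ofReal_integral_eq_lintegral_ofReal hf0mom
          (Filter.Eventually.of_forall fun x => by positivity)).symm
      have hA0 : A 0 = M0 := by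
        rw [hA]; norm_num
      rw [gaSeq, h0, hA0]
    | succ k ih =>
      obtain ⟨ihP, ihB⟩ := ih
      haveI := ihP
      refine ⟨by rw [gaSeq]; exact gaStep_prob hE xstar hmin hα0 hτ0.le hτ1 σ γ _, ?_⟩
      have hstep := gaStep_moment hE xstar hmin cu cl Rl hcu hcl hRl hgu hgl hα σ
        hτ0.le hτ1 γ hγ (gaSeq E α τ σ γ f0 k) (A k) (hAnn k) ihB
      rw [gaSeq]
      refine le_trans hstep (ENNReal.ofReal_le_ofReal ?_)
      -- real arithmetic
      set Ek : ℝ := Real.exp ((k : ℝ) * τ * q1) with hEk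
      set F : ℝ := Real.exp (τ * q1) with hF
      have hEk1 : (1:ℝ) ≤ Ek := by
        rw [hEk, show (1:ℝ) = Real.exp 0 by simp]
        apply Real.exp_le_exp.2
        positivity
      have hF1 : 1 + τ * q1 ≤ F := by
        rw [hF]
        linarith [Real.add_one_le_exp (τ * q1)]
      have hAsucc : A (k+1) = F * A k + q2 / q1 * (F - 1) := by
        rw [hA]
        simp only
        push_cast
        rw [show ((k:ℝ) + 1) * τ * q1 = (k:ℝ) * τ * q1 + τ * q1 by ring, Real.exp_add,
          ← hEk, ← hF]
        ring
      have hP : 0 ≤ A k := hAnn k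
      have h1 : (1 - τ) * A k + τ * (6 * (a + b * A k) + 12 * σ ^ 2 * d)
          = A k + τ * ((6 * b - 1) * A k + q2) := by
        rw [hq2]; ring
      have h2 : (6 * b - 1) * A k ≤ q1 * A k :=
        mul_le_mul_of_nonneg_right (by rw [hq1]; linarith) hP
      have h3 : (1 + τ * q1) * A k ≤ F * A k := mul_le_mul_of_nonneg_right hF1 hP
      have h4 : q2 / q1 * (τ * q1) ≤ q2 / q1 * (F - 1) :=
        mul_le_mul_of_nonneg_left (by linarith) hr
      have h5 : q2 / q1 * (τ * q1) = τ * q2 := by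
        rw [mul_comm τ q1, ← mul_assoc, hrq]; ring
      calc (1 - τ) * A k + τ * (6 * (2 * (Rl ^ 2 + 1 + 3 * (cu / cl) + 1 / cl)
            + 4 * (cu / cl) * A k) + 12 * σ ^ 2 * d)
          = A k + τ * ((6 * b - 1) * A k + q2) := by rw [hq2, hb, ha]; ring
        _ ≤ A k + τ * (q1 * A k + q2) := by nlinarith [h2]
        _ = (1 + τ * q1) * A k + τ * q2 := by ring
        _ ≤ F * A k + q2 / q1 * (F - 1) := by
            have h6 : τ * q2 ≤ q2 / q1 * (F - 1) := by rw [← h5]; exact h4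
            exact add_le_add h3 h6
        _ = A (k+1) := hAsucc.symm
  intro k
  obtain ⟨hP, hB⟩ := key k
  have hnn : 0 ≤ᵐ[gaSeq E α τ σ γ f0 k] fun x => ‖x‖ ^ 2 :=
    Filter.Eventually.of_forall fun x => by positivity
  rw [integral_eq_lintegral_of_nonneg_ae hnn
    ((continuous_norm.pow 2).aestronglyMeasurable)]
  calc (∫⁻ x, ENNReal.ofReal (‖x‖ ^ 2) ∂(gaSeq E α τ σ γ f0 k)).toReal
      ≤ (ENNReal.ofReal (A k)).toReal :=
        ENNReal.toReal_mono ENNReal.ofReal_ne_top hB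
    _ = A k := ENNReal.toReal_ofReal (hAnn k)
    _ = Real.exp ((k : ℝ) * τ * q1) * M0
        + q2 / q1 * (Real.exp ((k : ℝ) * τ * q1) - 1) := by rw [hA]
end
end

section
/- Mass concentration of the Boltzmann–Gibbs measure (Lemma on η^α): Let E : ℝ^d → ℝ be continuous and satisfy the growth conditions with global minimizer x⋆, and let δ̄ ∈ (0,1) and R > R_l. Then there exist R' > R depending only on R, c_u, c_l, and α_0 > 0 depending only on δ̄, such that for every α ≥ α_0 and every f ∈ P(ℝ^d) with f(B_R(0)) ≥ 1 − δ̄, one has η^α[f](B_{R'}(0)) ≥ 1 − δ̄. -/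
open MeasureTheory ProbabilityTheory Real Set

noncomputable section

set_option maxHeartbeats 1000000 in
/-- **Mass concentration of the Boltzmann–Gibbs measure.**
Given `δ̄ ∈ (0,1)` and `R > R_l`, there are `R' > R` (depending only on `R, c_u, c_l`)
and `α₀ > 0` (depending only on `δ̄`) such that for all `α ≥ α₀` and all probability
measures `f` with `f(B_R(0)) ≥ 1 − δ̄`, one has `η^α[f](B_{R'}(0)) ≥ 1 − δ̄`. -/
theorem gibbs_mass_concentration
    {d : ℕ} (hd : 1 ≤ d) (E : Ed d → ℝ) (hE : Continuous E)
    (xstar : Ed d) (hmin : ∀ x, E xstar ≤ E x)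
    (cu cl Rl : ℝ) (hcu : 0 < cu) (hcl : 0 < cl) (hRl : 0 < Rl)
    (hgu : ∀ x, E x - E xstar ≤ cu * (1 + ‖x‖ ^ 2))
    (hgl : ∀ x, Rl < ‖x‖ → cl * ‖x‖ ^ 2 ≤ E x - E xstar)
    (δ : ℝ) (hδ : δ ∈ Set.Ioo (0 : ℝ) 1) (R : ℝ) (hR : Rl < R) :
    ∃ R' > R, ∃ α₀ > (0 : ℝ), ∀ α : ℝ, α₀ ≤ α →
      ∀ f : Measure (Ed d), IsProbabilityMeasure f →
        ENNReal.ofReal (1 - δ) ≤ f (Metric.closedBall (0 : Ed d) R) →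
        ENNReal.ofReal (1 - δ) ≤ gibbs E α f (Metric.closedBall (0 : Ed d) R') := by
  obtain ⟨hδ0, hδ1⟩ := hδ
  have hR0 : 0 < R := hRl.trans hR
  set R' := max (R + 1) (Real.sqrt ((cu * (1 + R ^ 2) + 1) / cl)) with hR'def
  have hR'R : R < R' := lt_of_lt_of_le (by linarith) (le_max_left _ _)
  have hR'0 : 0 ≤ R' := by linarith
  have hR'sq : cu * (1 + R ^ 2) + 1 ≤ cl * R' ^ 2 := by
    have h1 : Real.sqrt ((cu * (1 + R ^ 2) + 1) / cl) ≤ R' := le_max_right _ _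
    have h2 : (cu * (1 + R ^ 2) + 1) / cl ≤ R' ^ 2 := by
      have := Real.sq_sqrt (show (0:ℝ) ≤ (cu * (1 + R ^ 2) + 1) / cl by positivity)
      nlinarith [Real.sqrt_nonneg ((cu * (1 + R ^ 2) + 1) / cl)]
    rw [div_le_iff₀ hcl] at h2
    linarith
  have hδδ : δ * (1 - δ) < 1 := by nlinarith
  have hδδ0 : 0 < δ * (1 - δ) := by nlinarith
  have hlogneg : Real.log (δ * (1 - δ)) < 0 := Real.log_neg hδδ0 hδδ
  refine ⟨R', hR'R, 1 - Real.log (δ * (1 - δ)), by linarith, ?_⟩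
  intro α hα f hf hfB
  have hα1 : 1 ≤ α := by linarith
  have hα0 : 0 < α := by linarith
  have hexpα : Real.exp (-α) ≤ δ * (1 - δ) := by
    calc Real.exp (-α) ≤ Real.exp (Real.log (δ * (1 - δ))) := by
          apply Real.exp_le_exp.mpr; linarith
      _ = δ * (1 - δ) := Real.exp_log hδδ0
  set w : Ed d → ENNReal := fun x => ENNReal.ofReal (Real.exp (-α * E x)) with hw
  have hwmeas : Measurable w :=
    ENNReal.measurable_ofReal.comp (Real.measurable_exp.comp (hE.measurable.const_mul (-α)))
  set Z : ENNReal := ∫⁻ x, w x ∂f with hZ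
  set K : ℝ := E xstar + cu * (1 + R ^ 2) with hK
  -- lower bound on Z
  have hZlb : ENNReal.ofReal (Real.exp (-α * K) * (1 - δ)) ≤ Z := by
    calc ENNReal.ofReal (Real.exp (-α * K) * (1 - δ))
        = ENNReal.ofReal (Real.exp (-α * K)) * ENNReal.ofReal (1 - δ) :=
          ENNReal.ofReal_mul (Real.exp_nonneg _)
      _ ≤ ENNReal.ofReal (Real.exp (-α * K)) * f (Metric.closedBall 0 R) :=
          mul_le_mul_right hfB _
      _ = ∫⁻ _ in Metric.closedBall (0 : Ed d) R, ENNReal.ofReal (Real.exp (-α * K)) ∂f := by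
          rw [setLIntegral_const]
      _ ≤ ∫⁻ x in Metric.closedBall (0 : Ed d) R, w x ∂f := by
          apply setLIntegral_mono hwmeas
          intro x hx
          apply ENNReal.ofReal_le_ofReal
          apply Real.exp_le_exp.mpr
          have hxR : ‖x‖ ≤ R := by
            simpa [Metric.mem_closedBall, dist_eq_norm] using hx
          have hEx : E x ≤ K := by
            have := hgu x
            have hx2 : ‖x‖ ^ 2 ≤ R ^ 2 := by nlinarith [norm_nonneg x]
            nlinarith
          nlinarith
      _ ≤ Z := setLIntegral_le_lintegral _ _
  have hZlb0 : (0 : ENNReal) < Z :=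
    lt_of_lt_of_le (ENNReal.ofReal_pos.mpr (mul_pos (Real.exp_pos _) (by linarith))) hZlb
  -- upper bound on Z
  have hZub : Z ≤ ENNReal.ofReal (Real.exp (-α * E xstar)) := by
    calc Z ≤ ∫⁻ _, ENNReal.ofReal (Real.exp (-α * E xstar)) ∂f := by
          apply lintegral_mono
          intro x
          apply ENNReal.ofReal_le_ofReal
          apply Real.exp_le_exp.mpr
          nlinarith [hmin x]
      _ = ENNReal.ofReal (Real.exp (-α * E xstar)) := by
          rw [lintegral_const, measure_univ, mul_one]
  have hZtop : Z ≠ ⊤ := (lt_of_le_of_lt hZub ENNReal.ofReal_lt_top).ne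
  have hZ0 : Z ≠ 0 := hZlb0.ne'
  -- bound on the numerator over the complement
  have hN : (∫⁻ x in (Metric.closedBall (0 : Ed d) R')ᶜ, w x ∂f) ≤ ENNReal.ofReal δ * Z := by
    calc (∫⁻ x in (Metric.closedBall (0 : Ed d) R')ᶜ, w x ∂f)
        ≤ ∫⁻ _ in (Metric.closedBall (0 : Ed d) R')ᶜ,
            ENNReal.ofReal (Real.exp (-α * (K + 1))) ∂f := by
          apply setLIntegral_mono measurable_const
          intro x hx
          apply ENNReal.ofReal_le_ofReal
          apply Real.exp_le_exp.mpr
          have hxR : R' < ‖x‖ := by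
            simp only [Set.mem_compl_iff, Metric.mem_closedBall, dist_eq_norm, sub_zero,
              not_le] at hx
            simpa using hx
          have hRlx : Rl < ‖x‖ := by linarith
          have h1 := hgl x hRlx
          have h2 : cl * R' ^ 2 ≤ cl * ‖x‖ ^ 2 :=
            mul_le_mul_of_nonneg_left (pow_le_pow_left₀ hR'0 hxR.le 2) hcl.le
          have hEx : K + 1 ≤ E x := by nlinarith
          nlinarith
      _ = ENNReal.ofReal (Real.exp (-α * (K + 1))) * f (Metric.closedBall (0 : Ed d) R')ᶜ := by
          rw [setLIntegral_const]
      _ ≤ ENNReal.ofReal (Real.exp (-α * (K + 1))) * 1 :=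
          mul_le_mul_right prob_le_one _
      _ = ENNReal.ofReal (Real.exp (-α * (K + 1))) := mul_one _
      _ ≤ ENNReal.ofReal δ * ENNReal.ofReal (Real.exp (-α * K) * (1 - δ)) := by
          rw [← ENNReal.ofReal_mul hδ0.le]
          apply ENNReal.ofReal_le_ofReal
          have hmul : Real.exp (-α * (K + 1)) = Real.exp (-α * K) * Real.exp (-α) := by
            rw [← Real.exp_add]; ring_nf
          rw [hmul]
          have h1 : Real.exp (-α * K) * Real.exp (-α) ≤ Real.exp (-α * K) * (δ * (1 - δ)) :=
            mul_le_mul_of_nonneg_left hexpα (Real.exp_nonneg _)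
          calc Real.exp (-α * K) * Real.exp (-α)
              ≤ Real.exp (-α * K) * (δ * (1 - δ)) := h1
            _ = δ * (Real.exp (-α * K) * (1 - δ)) := by ring
      _ ≤ ENNReal.ofReal δ * Z := mul_le_mul_right hZlb _
  -- apply gibbs
  have happ : ∀ s : Set (Ed d), MeasurableSet s →
      gibbs E α f s = Z⁻¹ * ∫⁻ x in s, w x ∂f := by
    intro s hs
    rw [gibbs, Measure.smul_apply, withDensity_apply _ hs, smul_eq_mul]
  have hcompl : gibbs E α f (Metric.closedBall (0 : Ed d) R')ᶜ ≤ ENNReal.ofReal δ := by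
    rw [happ _ (measurableSet_closedBall.compl)]
    calc Z⁻¹ * ∫⁻ x in (Metric.closedBall (0 : Ed d) R')ᶜ, w x ∂f
        ≤ Z⁻¹ * (ENNReal.ofReal δ * Z) := mul_le_mul_right hN _
      _ = ENNReal.ofReal δ * (Z⁻¹ * Z) := by ring
      _ = ENNReal.ofReal δ := by rw [ENNReal.inv_mul_cancel hZ0 hZtop, mul_one]
  have huniv : gibbs E α f Set.univ = 1 := by
    rw [happ _ MeasurableSet.univ, Measure.restrict_univ, ← hZ,
      ENNReal.inv_mul_cancel hZ0 hZtop]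
  have hunion : (1 : ENNReal) ≤ gibbs E α f (Metric.closedBall (0 : Ed d) R')
      + ENNReal.ofReal δ := by
    have hle := measure_union_le (μ := gibbs E α f)
      (Metric.closedBall (0 : Ed d) R') (Metric.closedBall (0 : Ed d) R')ᶜ
    rw [Set.union_compl_self] at hle
    calc (1 : ENNReal) = gibbs E α f Set.univ := huniv.symm
      _ ≤ gibbs E α f (Metric.closedBall (0 : Ed d) R')
            + gibbs E α f (Metric.closedBall (0 : Ed d) R')ᶜ := hle
      _ ≤ _ := add_le_add_right hcompl _
  have heq : ENNReal.ofReal (1 - δ) = 1 - ENNReal.ofReal δ := by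
    rw [← ENNReal.ofReal_one, ← ENNReal.ofReal_sub _ hδ0.le]
  rw [heq]
  exact tsub_le_iff_right.mpr hunion
end
end

section
/- Lower bound on the probability that an offspring lands near the minimizer: Let γ ∈ [0,1]^d, σ > 0, let μ = N(0, I_d) be the standard Gaussian on ℝ^d, let x⋆ ∈ ℝ^d and r > 0, and let η ∈ P(ℝ^d) be such that η(B_{R'}(0)) ≥ 1/2 for some R' ≥ |x⋆| + r. Then ∫∫∫ 1_{B_r(x⋆)}((1−γ)⊙x + γ⊙x_* + σξ) dη(x) dη(x_*) dμ(ξ) ≥ (1/4) · (2π)^{−d/2} · e^{−(2R'+r)²/(2σ²)} · Leb^d(B_{r/σ}(0)), where ⊙ denotes the componentwise product and Leb^d is d-dimensional Lebesgue measure. -/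
open MeasureTheory ProbabilityTheory Real Set

noncomputable section

/-! ### Auxiliary lemmas -/

open scoped ENNReal

lemma lintegral_fin_prod {n : ℕ} (μ : Fin n → Measure ℝ) [∀ i, SigmaFinite (μ i)]
    (f : Fin n → ℝ → ℝ≥0∞) (hf : ∀ i, Measurable (f i)) :
    ∫⁻ x, ∏ i, f i (x i) ∂Measure.pi μ = ∏ i, ∫⁻ t, f i t ∂μ i := by
  induction n with
  | zero => simp [lintegral_const, Measure.pi_univ]
  | succ n ih =>
    have h := ((measurePreserving_piFinSuccAbove μ 0).symm)
    rw [← h.lintegral_comp_emb (MeasurableEquiv.measurableEmbedding _)]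
    have hmeas : Measurable fun (y : Fin n → ℝ) => ∏ j, f j.succ (y j) :=
      Finset.measurable_prod _ (fun j _ => (hf j.succ).comp (measurable_pi_apply j))
    simp_rw [MeasurableEquiv.piFinSuccAbove_symm_apply, Fin.insertNthEquiv,
      Equiv.coe_fn_mk, Fin.insertNth_zero, Fin.prod_univ_succ, Fin.cons_zero, Fin.cons_succ,
      Fin.zero_succAbove, cast_eq]
    rw [lintegral_prod_mul (hf 0).aemeasurable hmeas.aemeasurable,
      ih (fun j => μ j.succ) (fun j => f j.succ) (fun j => hf j.succ)]

lemma pi_gauss_eq (d : ℕ) :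
    (Measure.pi fun _ : Fin d => gaussianReal 0 1) =
      (volume : Measure (Fin d → ℝ)).withDensity
        (fun x => ∏ i, gaussianPDF 0 1 (x i)) := by
  refine Measure.pi_eq fun s hs => ?_
  rw [withDensity_apply _ (MeasurableSet.univ_pi hs)]
  have key : ∀ x : Fin d → ℝ,
      (Set.univ.pi s).indicator (fun x => ∏ i, gaussianPDF 0 1 (x i)) x
        = ∏ i, (s i).indicator (gaussianPDF 0 1) (x i) := by
    intro x
    by_cases hx : x ∈ Set.univ.pi s
    · rw [Set.indicator_of_mem hx]
      exact Finset.prod_congr rfl fun i _ =>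
        (Set.indicator_of_mem (hx i (Set.mem_univ i)) _).symm
    · rw [Set.indicator_of_notMem hx]
      simp only [Set.mem_univ_pi, not_forall] at hx
      obtain ⟨i, hi⟩ := hx
      exact (Finset.prod_eq_zero (Finset.mem_univ i)
        (Set.indicator_of_notMem hi _)).symm
  rw [← lintegral_indicator (MeasurableSet.univ_pi hs) _]
  simp_rw [key]
  rw [volume_pi, lintegral_fin_prod _ _ (fun i => (measurable_gaussianPDF 0 1).indicator (hs i))]
  refine Finset.prod_congr rfl fun i _ => ?_
  rw [lintegral_indicator (hs i) _, gaussianReal_apply 0 one_ne_zero]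

lemma prod_gaussianPDF_eq {d : ℕ} (ξ : Ed d) :
    (∏ i, gaussianPDF 0 1 (ξ i)) =
      ENNReal.ofReal ((2 * π) ^ (-(d : ℝ) / 2) * Real.exp (-‖ξ‖ ^ 2 / 2)) := by
  have h2π : (0 : ℝ) < 2 * π := by positivity
  have h1 : ∀ i : Fin d, gaussianPDF 0 1 (ξ i)
      = ENNReal.ofReal ((√(2 * π))⁻¹ * rexp (-(ξ i) ^ 2 / 2)) := by
    intro i
    simp [gaussianPDF, gaussianPDFReal]
  simp_rw [h1]
  rw [← ENNReal.ofReal_prod_of_nonneg (fun i _ => by positivity)]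
  congr 1
  rw [Finset.prod_mul_distrib, Finset.prod_const, ← Real.exp_sum, Finset.card_univ,
    Fintype.card_fin]
  have h2 : ((√(2 * π))⁻¹) ^ d = (2 * π) ^ (-(d : ℝ) / 2) := by
    rw [Real.sqrt_eq_rpow, ← Real.rpow_neg h2π.le,
      ← Real.rpow_natCast ((2 * π) ^ (-(1/2) : ℝ)) d, ← Real.rpow_mul h2π.le]
    congr 1; ring
  have h3 : (∑ i, -(ξ i) ^ 2 / 2) = -‖ξ‖ ^ 2 / 2 := by
    have hn : ‖ξ‖ ^ 2 = ∑ i, (ξ i) ^ 2 := by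
      rw [EuclideanSpace.norm_eq, Real.sq_sqrt (by positivity)]
      simp [sq_abs]
    rw [hn, ← Finset.sum_div, ← Finset.sum_neg_distrib]
  rw [h2, h3]

lemma stdGaussian_apply {d : ℕ} (S : Set (Ed d)) (hS : MeasurableSet S) :
    stdGaussian d S =
      ∫⁻ ξ in S, ENNReal.ofReal ((2 * π) ^ (-(d : ℝ) / 2) * Real.exp (-‖ξ‖ ^ 2 / 2)) ∂volume := by
  rw [_root_.stdGaussian, Measure.map_apply (MeasurableEquiv.measurable _) hS, pi_gauss_eq,
    withDensity_apply _ (MeasurableEquiv.measurable _ hS)]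
  have hpre : (MeasurableEquiv.toLp 2 (Fin d → ℝ)).symm ⁻¹'
      ((MeasurableEquiv.toLp 2 (Fin d → ℝ)) ⁻¹' S) = S := by
    ext ξ; simp
  rw [← (EuclideanSpace.volume_preserving_symm_measurableEquiv_toLp (Fin d)).setLIntegral_comp_preimage_emb
    (MeasurableEquiv.measurableEmbedding _) _ _, hpre]
  refine setLIntegral_congr_fun hS (fun ξ _ => ?_)
  exact prod_gaussianPDF_eq ξ

lemma stdGaussian_closedBall_ge {d : ℕ} (c : Ed d) {ρ M : ℝ} (hρ : 0 ≤ ρ)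
    (hM : ‖c‖ + ρ ≤ M) :
    ENNReal.ofReal ((2 * π) ^ (-(d : ℝ) / 2) * Real.exp (-M ^ 2 / 2)) *
        volume (Metric.closedBall (0 : Ed d) ρ) ≤ stdGaussian d (Metric.closedBall c ρ) := by
  have hM0 : (0 : ℝ) ≤ M := le_trans (by positivity) hM
  rw [stdGaussian_apply _ measurableSet_closedBall]
  have hvol : volume (Metric.closedBall (0 : Ed d) ρ) = volume (Metric.closedBall c ρ) :=
    (Measure.addHaar_closedBall_center volume c ρ).symm
  rw [hvol, ← setLIntegral_const]
  refine setLIntegral_mono (by fun_prop) (fun ξ hξ => ?_)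
  refine ENNReal.ofReal_le_ofReal ?_
  have hξn : ‖ξ‖ ≤ M := by
    have h1 : ‖ξ‖ ≤ ‖c‖ + ‖ξ - c‖ := by
      have := norm_add_le c (ξ - c); simpa using this
    have h2 : ‖ξ - c‖ ≤ ρ := by
      rw [← dist_eq_norm]; exact Metric.mem_closedBall.mp hξ
    linarith
  have hmono : -M ^ 2 / 2 ≤ -‖ξ‖ ^ 2 / 2 := by nlinarith [norm_nonneg ξ]
  have h2π : (0:ℝ) ≤ (2 * π) ^ (-(d : ℝ) / 2) := Real.rpow_nonneg (by positivity) _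
  exact mul_le_mul_of_nonneg_left (Real.exp_le_exp.mpr hmono) h2π

/-- The componentwise convex combination used in `coll`. -/
def mixv {d : ℕ} (γ : Fin d → ℝ) (x xs : Ed d) : Ed d :=
  WithLp.toLp 2 fun i => (1 - γ i) * x i + γ i * xs i

lemma norm_sq_pair_le {d : ℕ} (γ : Fin d → ℝ) (hγ : ∀ i, γ i ∈ Set.Icc (0:ℝ) 1)
    (xstar x xs : Ed d) :
    ‖xstar - mixv γ x xs‖ ^ 2 + ‖xstar - mixv γ xs x‖ ^ 2 ≤
      ‖xstar - x‖ ^ 2 + ‖xstar - xs‖ ^ 2 := by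
  have hv : ∀ v : Ed d, ‖v‖ ^ 2 = ∑ i, (v i) ^ 2 := by
    intro v
    rw [EuclideanSpace.norm_eq, Real.sq_sqrt (by positivity)]
    simp [sq_abs]
  rw [hv, hv, hv, hv, ← Finset.sum_add_distrib, ← Finset.sum_add_distrib]
  refine Finset.sum_le_sum fun i _ => ?_
  have ht := hγ i
  have h1 : (xstar - mixv γ x xs) i
      = (1 - γ i) * (xstar i - x i) + γ i * (xstar i - xs i) := by
    simp [mixv, PiLp.sub_apply]; ring
  have h2 : (xstar - mixv γ xs x) i
      = γ i * (xstar i - x i) + (1 - γ i) * (xstar i - xs i) := by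
    simp [mixv, PiLp.sub_apply]; ring
  have h3 : (xstar - x) i = xstar i - x i := by simp [PiLp.sub_apply]
  have h4 : (xstar - xs) i = xstar i - xs i := by simp [PiLp.sub_apply]
  rw [h1, h2, h3, h4]
  nlinarith [mul_nonneg (mul_nonneg ht.1 (sub_nonneg.mpr ht.2))
    (sq_nonneg ((xstar i - x i) - (xstar i - xs i)))]

lemma exp_amgm (a b : ℝ) :
    2 * Real.exp (-(a ^ 2 + b ^ 2) / 4) ≤ Real.exp (-a ^ 2 / 2) + Real.exp (-b ^ 2 / 2) := by
  have e1 : Real.exp (-a ^ 2 / 2) = Real.exp (-a ^ 2 / 4) * Real.exp (-a ^ 2 / 4) := by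
    rw [← Real.exp_add]; congr 1; ring
  have e2 : Real.exp (-b ^ 2 / 2) = Real.exp (-b ^ 2 / 4) * Real.exp (-b ^ 2 / 4) := by
    rw [← Real.exp_add]; congr 1; ring
  have e3 : Real.exp (-(a ^ 2 + b ^ 2) / 4)
      = Real.exp (-a ^ 2 / 4) * Real.exp (-b ^ 2 / 4) := by
    rw [← Real.exp_add]; congr 1; ring
  rw [e1, e2, e3]
  nlinarith [sq_nonneg (Real.exp (-a ^ 2 / 4) - Real.exp (-b ^ 2 / 4))]

lemma exp_pair_ge {u1 u2 s ρ : ℝ} (h1 : 0 ≤ u1) (h2 : 0 ≤ u2) (hs : 0 ≤ s) (hρ : 0 ≤ ρ)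
    (hsq : u1 ^ 2 + u2 ^ 2 ≤ 2 * s ^ 2) :
    2 * Real.exp (-(s + ρ) ^ 2 / 2) ≤
      Real.exp (-(u1 + ρ) ^ 2 / 2) + Real.exp (-(u2 + ρ) ^ 2 / 2) := by
  have hab : (u1 + ρ) ^ 2 + (u2 + ρ) ^ 2 ≤ 2 * (s + ρ) ^ 2 := by
    have hsum : u1 + u2 ≤ 2 * s := by nlinarith [sq_nonneg (u1 - u2)]
    nlinarith
  refine le_trans ?_ (exp_amgm (u1 + ρ) (u2 + ρ))
  have h : -(s + ρ) ^ 2 / 2 ≤ -((u1 + ρ) ^ 2 + (u2 + ρ) ^ 2) / 4 := by linarith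
  have := Real.exp_le_exp.mpr h
  linarith

lemma exp_target_le {R' r σ : ℝ} (hσ : 0 < σ) (h2R : 0 ≤ 2 * R') (hr : 0 ≤ r) :
    Real.exp (-(2 * R' + r) ^ 2 / (2 * σ ^ 2)) ≤
      Real.exp (-((2 * R' - r) / σ + r / σ) ^ 2 / 2) := by
  apply Real.exp_le_exp.mpr
  rw [← add_div, show (2 * R' - r + r) = 2 * R' by ring, div_pow,
    neg_div, neg_div, neg_le_neg_iff, div_div, show σ ^ 2 * 2 = 2 * σ ^ 2 by ring]
  gcongr
  nlinarith

/-- **Lower bound on the probability that an offspring lands near the minimizer:**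
if `η(B_{R'}(0)) ≥ 1/2` with `R' ≥ |x⋆| + r`, then
`∫∫∫ 1_{B_r(x⋆)}(C(x,x_*,ξ)) dη dη dμ ≥ (1/4)(2π)^{-d/2} e^{-(2R'+r)²/(2σ²)} Leb^d(B_{r/σ}(0))`. -/
theorem offspring_near_minimizer_lower_bound
    {d : ℕ} (hd : 1 ≤ d)
    (γ : Fin d → ℝ) (hγ : ∀ i, γ i ∈ Set.Icc (0 : ℝ) 1)
    (σ : ℝ) (hσ : 0 < σ) (xstar : Ed d) (r : ℝ) (hr : 0 < r)
    (η : Measure (Ed d)) [IsProbabilityMeasure η]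
    (R' : ℝ) (hR' : ‖xstar‖ + r ≤ R')
    (hηR : ENNReal.ofReal (1 / 2) ≤ η (Metric.closedBall (0 : Ed d) R')) :
    (1 / 4 : ℝ) * (2 * π) ^ (-(d : ℝ) / 2) * Real.exp (-(2 * R' + r) ^ 2 / (2 * σ ^ 2)) *
        (volume (Metric.closedBall (0 : Ed d) (r / σ))).toReal ≤
      ∫ z, (Metric.closedBall xstar r).indicator (fun _ => (1 : ℝ))
          (coll γ σ z.1.1 z.1.2 z.2) ∂((η.prod η).prod (stdGaussian d)) := by
  haveI hμprob : IsProbabilityMeasure (stdGaussian d) := by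
    unfold _root_.stdGaussian
    exact Measure.isProbabilityMeasure_map (MeasurableEquiv.measurable _).aemeasurable
  set KK : ℝ := (2 * π) ^ (-(d : ℝ) / 2) with hKK
  set EE : ℝ := Real.exp (-(2 * R' + r) ^ 2 / (2 * σ ^ 2)) with hEE
  set V : ℝ≥0∞ := volume (Metric.closedBall (0 : Ed d) (r / σ)) with hV
  have hKK0 : 0 ≤ KK := Real.rpow_nonneg (by positivity) _
  have hEE0 : 0 < EE := Real.exp_pos _
  have hrσ : (0:ℝ) ≤ r / σ := le_of_lt (div_pos hr hσ)
  set B := Metric.closedBall (0 : Ed d) R' with hB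
  -- measurability of the collision map
  have hFm : Measurable (fun p : (Ed d × Ed d) × Ed d => coll γ σ p.1.1 p.1.2 p.2) := by
    refine (MeasurableEquiv.toLp 2 (Fin d → ℝ)).measurable.comp
      (f := fun p : (Ed d × Ed d) × Ed d => fun i =>
        (1 - γ i) * p.1.1 i + γ i * p.1.2 i + σ * p.2 i) ?_
    apply measurable_pi_lambda
    intro i
    have h1 : Measurable fun p : (Ed d × Ed d) × Ed d => p.1.1 i :=
      (measurable_pi_apply i).comp ((MeasurableEquiv.toLp 2 (Fin d → ℝ)).symm.measurable.comp
          (measurable_fst.comp measurable_fst))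
    have h2 : Measurable fun p : (Ed d × Ed d) × Ed d => p.1.2 i :=
      (measurable_pi_apply i).comp ((MeasurableEquiv.toLp 2 (Fin d → ℝ)).symm.measurable.comp
          (measurable_snd.comp measurable_fst))
    have h3 : Measurable fun p : (Ed d × Ed d) × Ed d => p.2 i :=
      (measurable_pi_apply i).comp ((MeasurableEquiv.toLp 2 (Fin d → ℝ)).symm.measurable.comp
          measurable_snd)
    exact ((h1.const_mul _).add (h2.const_mul _)).add (h3.const_mul _)
  set A : Set ((Ed d × Ed d) × Ed d) :=
    (fun p : (Ed d × Ed d) × Ed d => coll γ σ p.1.1 p.1.2 p.2) ⁻¹'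
      Metric.closedBall xstar r with hAdef
  have hA : MeasurableSet A := hFm measurableSet_closedBall
  -- rewrite the integral as a measure
  have hind : ∀ z : (Ed d × Ed d) × Ed d,
      (Metric.closedBall xstar r).indicator (fun _ => (1:ℝ)) (coll γ σ z.1.1 z.1.2 z.2)
        = A.indicator (fun _ => (1:ℝ)) z := by
    intro z
    by_cases hz : z ∈ A
    · rw [Set.indicator_of_mem hz, Set.indicator_of_mem (Set.mem_preimage.mp hz)]
    · rw [Set.indicator_of_notMem hz,
        Set.indicator_of_notMem (fun h => hz (Set.mem_preimage.mpr h))]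
  simp_rw [hind]
  rw [integral_indicator_const (1:ℝ) hA, smul_eq_mul, mul_one]
  -- sections of A are closed balls
  have hsect : ∀ z : Ed d × Ed d, Prod.mk z ⁻¹' A
      = Metric.closedBall (σ⁻¹ • (xstar - mixv γ z.1 z.2)) (r / σ) := by
    intro z
    ext ξ
    simp only [hAdef, Set.mem_preimage, Metric.mem_closedBall, dist_eq_norm]
    have hc : coll γ σ z.1 z.2 ξ - xstar
        = σ • (ξ - σ⁻¹ • (xstar - mixv γ z.1 z.2)) := by
      ext i
      simp only [coll, mixv, PiLp.sub_apply, PiLp.smul_apply, smul_eq_mul, PiLp.toLp_apply]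
      field_simp
      ring
    rw [hc, norm_smul, Real.norm_eq_abs, abs_of_pos hσ]
    exact (le_div_iff₀' hσ).symm
  set g : Ed d × Ed d → ℝ≥0∞ := fun z => stdGaussian d (Prod.mk z ⁻¹' A) with hg
  have hgmeas : Measurable g := measurable_measure_prodMk_left hA
  set W : Set (Ed d × Ed d) := B ×ˢ B with hW
  have hWm : MeasurableSet W := measurableSet_closedBall.prod measurableSet_closedBall
  -- pointwise lower bound on the symmetrized sections
  have hkey : ∀ x xs : Ed d, ‖x‖ ≤ R' → ‖xs‖ ≤ R' →
      ENNReal.ofReal (KK * (2 * EE)) * V ≤ g (x, xs) + g (xs, x) := by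
    intro x xs hxn hxsn
    have hu10 : (0:ℝ) ≤ ‖xstar - mixv γ x xs‖ := norm_nonneg _
    have hu20 : (0:ℝ) ≤ ‖xstar - mixv γ xs x‖ := norm_nonneg _
    have hxstar0 : (0:ℝ) ≤ ‖xstar‖ := norm_nonneg _
    have h2Rr : (0:ℝ) ≤ 2 * R' - r := by linarith
    have hsq : (‖xstar - mixv γ x xs‖ / σ) ^ 2 + (‖xstar - mixv γ xs x‖ / σ) ^ 2
        ≤ 2 * ((2 * R' - r) / σ) ^ 2 := by
      have hp := norm_sq_pair_le γ hγ xstar x xs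
      have hx2 : ‖xstar - x‖ ≤ 2 * R' - r := by
        have := norm_sub_le xstar x; linarith
      have hx3 : ‖xstar - xs‖ ≤ 2 * R' - r := by
        have := norm_sub_le xstar xs; linarith
      have h4 : ‖xstar - mixv γ x xs‖ ^ 2 + ‖xstar - mixv γ xs x‖ ^ 2
          ≤ 2 * (2 * R' - r) ^ 2 := by
        nlinarith [norm_nonneg (xstar - x), norm_nonneg (xstar - xs)]
      rw [div_pow, div_pow, div_pow, ← add_div, ← mul_div_assoc]
      gcongr
    have hexp := exp_pair_ge (div_nonneg hu10 hσ.le) (div_nonneg hu20 hσ.le)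
      (div_nonneg h2Rr hσ.le) hrσ hsq
    have hEle := exp_target_le hσ (by linarith : (0:ℝ) ≤ 2 * R') hr.le
    have h2EE : 2 * EE ≤ Real.exp (-(‖xstar - mixv γ x xs‖ / σ + r / σ) ^ 2 / 2)
        + Real.exp (-(‖xstar - mixv γ xs x‖ / σ + r / σ) ^ 2 / 2) := by
      rw [hEE]
      nlinarith [hEle, hexp]
    have hnorm1 : ‖σ⁻¹ • (xstar - mixv γ x xs)‖ = ‖xstar - mixv γ x xs‖ / σ := by
      rw [norm_smul, Real.norm_eq_abs, abs_of_pos (inv_pos.mpr hσ), inv_mul_eq_div]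
    have hnorm2 : ‖σ⁻¹ • (xstar - mixv γ xs x)‖ = ‖xstar - mixv γ xs x‖ / σ := by
      rw [norm_smul, Real.norm_eq_abs, abs_of_pos (inv_pos.mpr hσ), inv_mul_eq_div]
    have hb1 : ENNReal.ofReal (KK * Real.exp (-(‖xstar - mixv γ x xs‖ / σ + r / σ) ^ 2 / 2)) * V
        ≤ g (x, xs) := by
      have := stdGaussian_closedBall_ge (σ⁻¹ • (xstar - mixv γ x xs)) hrσ
        (le_of_eq (by rw [hnorm1]))
      rw [hg]
      simp only []
      rw [hsect (x, xs)]
      exact this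
    have hb2 : ENNReal.ofReal (KK * Real.exp (-(‖xstar - mixv γ xs x‖ / σ + r / σ) ^ 2 / 2)) * V
        ≤ g (xs, x) := by
      have := stdGaussian_closedBall_ge (σ⁻¹ • (xstar - mixv γ xs x)) hrσ
        (le_of_eq (by rw [hnorm2]))
      rw [hg]
      simp only []
      rw [hsect (xs, x)]
      exact this
    calc ENNReal.ofReal (KK * (2 * EE)) * V
        ≤ ENNReal.ofReal (KK * (Real.exp (-(‖xstar - mixv γ x xs‖ / σ + r / σ) ^ 2 / 2)
            + Real.exp (-(‖xstar - mixv γ xs x‖ / σ + r / σ) ^ 2 / 2))) * V := by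
          exact mul_le_mul_left (ENNReal.ofReal_le_ofReal
            (mul_le_mul_of_nonneg_left h2EE hKK0)) V
      _ = ENNReal.ofReal (KK * Real.exp (-(‖xstar - mixv γ x xs‖ / σ + r / σ) ^ 2 / 2)) * V
          + ENNReal.ofReal (KK * Real.exp (-(‖xstar - mixv γ xs x‖ / σ + r / σ) ^ 2 / 2)) * V := by
          rw [mul_add KK, ENNReal.ofReal_add (by positivity) (by positivity), add_mul]
      _ ≤ g (x, xs) + g (xs, x) := add_le_add hb1 hb2
  -- measure-theoretic chain
  have hprod : ((η.prod η).prod (stdGaussian d)) A = ∫⁻ z, g z ∂(η.prod η) :=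
    Measure.prod_apply hA
  have hswapW : Prod.swap ⁻¹' W = W := by
    ext z; simp only [hW, Set.mem_preimage, Set.mem_prod, Prod.fst_swap, Prod.snd_swap]
    exact and_comm
  have hswap : ∫⁻ z in W, g (Prod.swap z) ∂(η.prod η) = ∫⁻ z in W, g z ∂(η.prod η) := by
    conv_rhs => rw [← Measure.prod_swap]
    rw [setLIntegral_map hWm hgmeas measurable_swap, hswapW]
  have hWge : ENNReal.ofReal (1/4) ≤ (η.prod η) W := by
    rw [hW, Measure.prod_prod]
    have h14 : ENNReal.ofReal (1/4) = ENNReal.ofReal (1/2) * ENNReal.ofReal (1/2) := by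
      rw [← ENNReal.ofReal_mul (by norm_num)]
      congr 1
      norm_num
    rw [h14]
    exact mul_le_mul' hηR hηR
  have hdouble : 2 * (ENNReal.ofReal (KK * EE) * V * ENNReal.ofReal (1/4))
      ≤ 2 * ∫⁻ z in W, g z ∂(η.prod η) := by
    calc 2 * (ENNReal.ofReal (KK * EE) * V * ENNReal.ofReal (1/4))
        = ENNReal.ofReal (KK * (2 * EE)) * V * ENNReal.ofReal (1/4) := by
          have h2 : ENNReal.ofReal (KK * (2 * EE)) = 2 * ENNReal.ofReal (KK * EE) := by
            rw [show KK * (2 * EE) = 2 * (KK * EE) by ring,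
              ENNReal.ofReal_mul (by norm_num : (0:ℝ) ≤ 2)]
            norm_num
          rw [h2]
          ring
      _ ≤ ENNReal.ofReal (KK * (2 * EE)) * V * ((η.prod η) W) := by
          exact mul_le_mul_right hWge _
      _ = ∫⁻ _ in W, ENNReal.ofReal (KK * (2 * EE)) * V ∂(η.prod η) := by
          rw [setLIntegral_const]
      _ ≤ ∫⁻ z in W, (g z + g (Prod.swap z)) ∂(η.prod η) := by
          refine setLIntegral_mono' hWm (fun z hz => ?_)
          obtain ⟨hz1, hz2⟩ := hz
          exact hkey z.1 z.2 (mem_closedBall_zero_iff.mp hz1) (mem_closedBall_zero_iff.mp hz2)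
      _ = (∫⁻ z in W, g z ∂(η.prod η)) + ∫⁻ z in W, g (Prod.swap z) ∂(η.prod η) := by
          exact lintegral_add_left hgmeas _
      _ = 2 * ∫⁻ z in W, g z ∂(η.prod η) := by rw [hswap, two_mul]
  have hmain : ENNReal.ofReal (KK * EE) * V * ENNReal.ofReal (1/4)
      ≤ ((η.prod η).prod (stdGaussian d)) A := by
    rw [hprod]
    refine le_trans ?_ (setLIntegral_le_lintegral (μ := η.prod η) W g)
    exact (ENNReal.mul_le_mul_iff_right (by norm_num) (by norm_num)).mp hdouble
  -- conclude
  have hνne : ((η.prod η).prod (stdGaussian d)) A ≠ ⊤ := measure_ne_top _ _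
  have hVne : V ≠ ⊤ := by
    rw [hV]; exact (measure_closedBall_lt_top).ne
  calc (1 / 4 : ℝ) * KK * EE * V.toReal
      = (ENNReal.ofReal (KK * EE) * V * ENNReal.ofReal (1/4)).toReal := by
        rw [ENNReal.toReal_mul, ENNReal.toReal_mul,
          ENNReal.toReal_ofReal (by positivity), ENNReal.toReal_ofReal (by norm_num)]
        ring
    _ ≤ (((η.prod η).prod (stdGaussian d)) A).toReal := ENNReal.toReal_mono hνne hmain
end
end

section
/- Evolution of the mean under the GA kinetic update with Boltzmann selection: Let E : ℝ^d → ℝ be continuous and bounded below, let α > 0, and let (f_(k)) be the GA kinetic sequence with Boltzmann selection started from f_(0) ∈ P_1(ℝ^d). Then each f_(k) has finite first moment and for all k ∈ ℕ, m[f_(k+1)] = (1 − τ) m[f_(k)] + τ m^α[f_(k)], where m[f] := ∫ x df(x) and m^α[f] := (∫ x e^{−αE(x)} df(x))/(∫ e^{−αE(x)} df(x)). Consequently |m[f_(k+1)] − x⋆| ≤ (1−τ)|m[f_(k)] − x⋆| + τ|m^α[f_(k)] − x⋆| for any x⋆ ∈ ℝ^d. -/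
open MeasureTheory ProbabilityTheory Real Set

noncomputable section

/-! ### Auxiliary material -/

open scoped NNReal ENNReal

namespace GAux
variable {d : ℕ}

/-- diagonal continuous linear map on `Ed d` -/
def diag (c : Fin d → ℝ) : Ed d →L[ℝ] Ed d :=
  LinearMap.toContinuousLinearMap
    { toFun := fun x => (WithLp.toLp 2 (fun i => c i * x i) : Ed d)
      map_add' := by
        intro x y; ext i
        simp [PiLp.add_apply, mul_add]
      map_smul' := by
        intro r x; ext i
        simp [PiLp.smul_apply, smul_eq_mul]; ring }

@[simp] lemma diag_apply (c : Fin d → ℝ) (x : Ed d) (i : Fin d) :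
    diag c x i = c i * x i := rfl

lemma norm_diag_le (c : Fin d → ℝ) (hc : ∀ i, |c i| ≤ 1) (x : Ed d) :
    ‖diag c x‖ ≤ ‖x‖ := by
  rw [EuclideanSpace.norm_eq, EuclideanSpace.norm_eq]
  apply Real.sqrt_le_sqrt
  apply Finset.sum_le_sum
  intro i _
  have h : ‖diag c x i‖ ≤ ‖x i‖ := by
    simp only [diag_apply, Real.norm_eq_abs, abs_mul]
    exact mul_le_of_le_one_left (abs_nonneg _) (hc i)
  exact pow_le_pow_left₀ (norm_nonneg _) h 2

lemma norm_le_sum_abs (x : Ed d) : ‖x‖ ≤ ∑ i, |x i| := by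
  rw [EuclideanSpace.norm_eq]
  have h1 : ∑ i, ‖x i‖ ^ 2 ≤ (∑ i, |x i|) ^ 2 := by
    simpa [Real.norm_eq_abs] using
      Finset.sum_sq_le_sq_sum_of_nonneg (s := Finset.univ)
        (f := fun i => |x i|) (fun i _ => abs_nonneg _)
  calc √(∑ i, ‖x i‖ ^ 2) ≤ √((∑ i, |x i|) ^ 2) := Real.sqrt_le_sqrt h1
    _ = ∑ i, |x i| := Real.sqrt_sq (Finset.sum_nonneg fun i _ => abs_nonneg _)

section weight

variable {E : Ed d → ℝ} {α M : ℝ}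

lemma weight_cont (hEc : Continuous E) : Continuous fun x : Ed d => rexp (-α * E x) :=
  Real.continuous_exp.comp (continuous_const.mul hEc)

lemma weight_integrable (hEc : Continuous E) (hM : ∀ x, rexp (-α * E x) ≤ M)
    (f : Measure (Ed d)) [IsProbabilityMeasure f] :
    Integrable (fun x => rexp (-α * E x)) f := by
  refine Integrable.mono' (integrable_const M) (weight_cont hEc).aestronglyMeasurable
    (ae_of_all _ fun x => ?_)
  rw [Real.norm_eq_abs, abs_of_pos (exp_pos _)]
  exact hM x

lemma integral_weight_pos (hEc : Continuous E) (hM : ∀ x, rexp (-α * E x) ≤ M)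
    (f : Measure (Ed d)) [IsProbabilityMeasure f] :
    0 < ∫ x, rexp (-α * E x) ∂f := by
  refine (integral_pos_iff_support_of_nonneg (fun x => (exp_pos _).le)
    (weight_integrable hEc hM f)).mpr ?_
  have h : Function.support (fun x : Ed d => rexp (-α * E x)) = univ := by
    ext x; simp [Function.mem_support, (exp_pos (-α * E x)).ne']
  rw [h, measure_univ]
  norm_num

lemma Z_eq (hEc : Continuous E) (hM : ∀ x, rexp (-α * E x) ≤ M)
    (f : Measure (Ed d)) [IsProbabilityMeasure f] :
    ∫⁻ x, ENNReal.ofReal (rexp (-α * E x)) ∂f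
      = ENNReal.ofReal (∫ x, rexp (-α * E x) ∂f) :=
  (ofReal_integral_eq_lintegral_ofReal (weight_integrable hEc hM f)
    (ae_of_all _ fun x => (exp_pos _).le)).symm

lemma Z_ne_zero (hEc : Continuous E) (hM : ∀ x, rexp (-α * E x) ≤ M)
    (f : Measure (Ed d)) [IsProbabilityMeasure f] :
    ∫⁻ x, ENNReal.ofReal (rexp (-α * E x)) ∂f ≠ 0 := by
  rw [Z_eq hEc hM f, ne_eq, ENNReal.ofReal_eq_zero, not_le]
  exact integral_weight_pos hEc hM f

lemma Z_ne_top (hEc : Continuous E) (hM : ∀ x, rexp (-α * E x) ≤ M)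
    (f : Measure (Ed d)) [IsProbabilityMeasure f] :
    ∫⁻ x, ENNReal.ofReal (rexp (-α * E x)) ∂f ≠ ⊤ := by
  rw [Z_eq hEc hM f]; exact ENNReal.ofReal_ne_top

lemma gibbs_isProb (hEc : Continuous E) (hM : ∀ x, rexp (-α * E x) ≤ M)
    (f : Measure (Ed d)) [IsProbabilityMeasure f] :
    IsProbabilityMeasure (gibbs E α f) := by
  constructor
  rw [gibbs, Measure.smul_apply, withDensity_apply _ MeasurableSet.univ,
    setLIntegral_univ, smul_eq_mul]
  exact ENNReal.inv_mul_cancel (Z_ne_zero hEc hM f) (Z_ne_top hEc hM f)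

lemma gibbs_integrable (hEc : Continuous E) (hM : ∀ x, rexp (-α * E x) ≤ M)
    (f : Measure (Ed d)) [IsProbabilityMeasure f]
    (hf : Integrable (fun x : Ed d => ‖x‖) f) :
    Integrable (fun x : Ed d => ‖x‖) (gibbs E α f) := by
  rw [gibbs]
  refine Integrable.smul_measure ?_ (ENNReal.inv_ne_top.mpr (Z_ne_zero hEc hM f))
  have hm : Measurable fun x : Ed d => ENNReal.ofReal (rexp (-α * E x)) :=
    ENNReal.measurable_ofReal.comp (weight_cont (α := α) hEc).measurable
  rw [integrable_withDensity_iff_integrable_smul' hm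
    (ae_of_all _ fun _ => ENNReal.ofReal_lt_top)]
  have h : (fun x : Ed d => (ENNReal.ofReal (rexp (-α * E x))).toReal • ‖x‖)
      = fun x : Ed d => rexp (-α * E x) * ‖x‖ := by
    funext x; rw [ENNReal.toReal_ofReal (exp_pos _).le, smul_eq_mul]
  rw [h]
  refine Integrable.mono' (hf.const_mul M)
    ((weight_cont hEc).aestronglyMeasurable.mul hf.aestronglyMeasurable)
    (ae_of_all _ fun x => ?_)
  rw [Real.norm_eq_abs, abs_mul, abs_of_pos (exp_pos _), abs_of_nonneg (norm_nonneg _)]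
  exact mul_le_mul_of_nonneg_right (hM x) (norm_nonneg _)

lemma gibbs_mean (hEc : Continuous E) (hM : ∀ x, rexp (-α * E x) ≤ M)
    (f : Measure (Ed d)) [IsProbabilityMeasure f] :
    (∫ x, x ∂(gibbs E α f)) = wmean E α f := by
  rw [gibbs, integral_smul_measure]
  have hd : (fun x : Ed d => ENNReal.ofReal (rexp (-α * E x)))
      = fun x : Ed d => ((Real.toNNReal (rexp (-α * E x)) : ℝ≥0) : ℝ≥0∞) := rfl
  have hm2 : Measurable fun x : Ed d => (rexp (-α * E x)).toNNReal :=
    (continuous_real_toNNReal.comp (weight_cont (α := α) hEc)).measurable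
  rw [hd, integral_withDensity_eq_integral_smul hm2 (fun x : Ed d => x)]
  rw [wmean]
  congr 1
  · rw [ENNReal.toReal_inv, ← hd, Z_eq hEc hM f,
      ENNReal.toReal_ofReal (integral_nonneg fun x => (exp_pos _).le)]
  · congr 1; funext x
    rw [NNReal.smul_def, Real.coe_toNNReal _ (exp_pos _).le]

end weight

/-! ### Gaussian facts -/

lemma integrable_id_gaussianReal : Integrable (id : ℝ → ℝ) (gaussianReal 0 1) := by
  rw [gaussianReal_of_var_ne_zero 0 one_ne_zero]
  rw [integrable_withDensity_iff_integrable_smul' (measurable_gaussianPDF 0 1)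
    (ae_of_all _ fun x => ENNReal.ofReal_lt_top)]
  have h1 : (fun x : ℝ => (gaussianPDF 0 1 x).toReal • id x)
      = fun x : ℝ => (√(2 * π))⁻¹ * (x * rexp (-2⁻¹ * x ^ 2)) := by
    funext x
    rw [gaussianPDF, ENNReal.toReal_ofReal (gaussianPDFReal_nonneg _ _ _), gaussianPDFReal]
    have : -(x - 0) ^ 2 / (2 * ((1 : ℝ≥0) : ℝ)) = -2⁻¹ * x ^ 2 := by
      push_cast; ring
    rw [this]
    push_cast
    simp [smul_eq_mul]
    ring
  rw [h1]
  exact (integrable_mul_exp_neg_mul_sq (by norm_num : (0:ℝ) < 2⁻¹)).const_mul _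

lemma integral_id_gaussianReal : ∫ x, x ∂(gaussianReal 0 1) = 0 := by
  have hmap : (gaussianReal 0 1).map (fun x => -1 * x) = gaussianReal 0 1 := by
    have := gaussianReal_map_const_mul (μ := 0) (v := 1) (-1)
    simpa using this
  have key : ∫ t, t ∂((gaussianReal 0 1).map (fun x : ℝ => -1 * x))
      = ∫ x, -1 * x ∂(gaussianReal 0 1) :=
    integral_map (f := fun t : ℝ => t) ((measurable_id.const_mul (-1)).aemeasurable)
      aestronglyMeasurable_id
  rw [hmap] at key
  have h2 : ∫ x, -1 * x ∂(gaussianReal 0 1) = -∫ x, x ∂(gaussianReal 0 1) := by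
    simp only [neg_one_mul]
    exact integral_neg _
  rw [h2] at key
  linarith

lemma map_eval_pi {ι : Type*} [Fintype ι] [DecidableEq ι] {β : ι → Type*}
    [∀ i, MeasurableSpace (β i)]
    (μ : ∀ i, Measure (β i)) [∀ i, IsProbabilityMeasure (μ i)] (i : ι) :
    (Measure.pi μ).map (Function.eval i) = μ i := by
  ext s hs
  rw [Measure.map_apply (measurable_pi_apply i) hs]
  rw [Set.eval_preimage]
  rw [Measure.pi_pi]
  rw [Finset.prod_eq_single i]
  · simp
  · intro j _ hj
    simp [Function.update_of_ne hj]
  · simp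

instance stdGaussian_isProb : IsProbabilityMeasure (stdGaussian d) := by
  rw [_root_.stdGaussian]
  exact Measure.isProbabilityMeasure_map (MeasurableEquiv.measurable _).aemeasurable

lemma eval_integrable (i : Fin d) {g : ℝ → ℝ} (hg : Integrable g (gaussianReal 0 1)) :
    Integrable (fun y : Fin d → ℝ => g (y i))
      (Measure.pi fun _ : Fin d => gaussianReal 0 1) := by
  have h := hg
  rw [← map_eval_pi (fun _ : Fin d => gaussianReal 0 1) i] at h
  exact (integrable_map_measure h.aestronglyMeasurable
    (measurable_pi_apply i).aemeasurable).mp h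

lemma eval_integral (i : Fin d) :
    ∫ y, y i ∂(Measure.pi fun _ : Fin d => gaussianReal 0 1) = 0 := by
  have hasm : AEStronglyMeasurable (fun t : ℝ => t)
      ((Measure.pi fun _ : Fin d => gaussianReal 0 1).map (Function.eval i)) :=
    aestronglyMeasurable_id
  have h : ∫ t, t ∂((Measure.pi fun _ : Fin d => gaussianReal 0 1).map (Function.eval i))
      = ∫ y, y i ∂(Measure.pi fun _ : Fin d => gaussianReal 0 1) :=
    integral_map (measurable_pi_apply i).aemeasurable hasm
  rw [← h, map_eval_pi]
  exact integral_id_gaussianReal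

lemma integrable_norm_stdGaussian : Integrable (fun x : Ed d => ‖x‖) (stdGaussian d) := by
  rw [_root_.stdGaussian]
  rw [integrable_map_measure (by fun_prop) (MeasurableEquiv.measurable _).aemeasurable]
  refine Integrable.mono' (g := fun y : Fin d → ℝ => ∑ i, |y i|)
    (integrable_finset_sum _ fun i _ => eval_integrable i integrable_id_gaussianReal.abs)
    (by fun_prop) (ae_of_all _ fun y => ?_)
  simp only [Function.comp_apply]
  rw [Real.norm_eq_abs, abs_of_nonneg (norm_nonneg _)]
  exact norm_le_sum_abs _

lemma integrable_id_stdGaussian : Integrable (fun x : Ed d => x) (stdGaussian d) :=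
  (integrable_norm_iff (aestronglyMeasurable_id)).mp integrable_norm_stdGaussian

lemma integral_stdGaussian : ∫ x, x ∂(stdGaussian d) = 0 := by
  ext i
  have h1 : (∫ x, x ∂(stdGaussian d)) i
      = ∫ x, (EuclideanSpace.proj (𝕜 := ℝ) i) x ∂(stdGaussian d) := by
    rw [(EuclideanSpace.proj (𝕜 := ℝ) i).integral_comp_comm integrable_id_stdGaussian]
    rfl
  have h2 : ∫ x, (EuclideanSpace.proj (𝕜 := ℝ) i) x ∂(stdGaussian d)
      = ∫ y, y i ∂(Measure.pi fun _ : Fin d => gaussianReal 0 1) := by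
    rw [_root_.stdGaussian, integral_map (MeasurableEquiv.measurable _).aemeasurable
      (by fun_prop)]
    rfl
  rw [h1, h2, eval_integral]
  rfl

/-! ### Collision map integration -/

lemma measurable_coll (γ : Fin d → ℝ) (σ : ℝ) :
    Measurable (fun p : (Ed d × Ed d) × Ed d => coll γ σ p.1.1 p.1.2 p.2) := by
  refine (WithLp.measurable_toLp 2 (Fin d → ℝ)).comp (f := fun p : (Ed d × Ed d) × Ed d =>
    fun i => (1 - γ i) * p.1.1 i + γ i * p.1.2 i + σ * p.2 i) ?_
  apply measurable_pi_lambda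
  intro i
  have h1 : Measurable (fun p : (Ed d × Ed d) × Ed d => p.1.1 i) :=
    (measurable_pi_apply i).comp ((WithLp.measurable_ofLp 2 _).comp (measurable_fst.comp measurable_fst))
  have h2 : Measurable (fun p : (Ed d × Ed d) × Ed d => p.1.2 i) :=
    (measurable_pi_apply i).comp ((WithLp.measurable_ofLp 2 _).comp (measurable_snd.comp measurable_fst))
  have h3 : Measurable (fun p : (Ed d × Ed d) × Ed d => p.2 i) :=
    (measurable_pi_apply i).comp ((WithLp.measurable_ofLp 2 _).comp measurable_snd)
  exact ((h1.const_mul _).add (h2.const_mul _)).add (h3.const_mul _)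

lemma coll_eq (γ : Fin d → ℝ) (σ : ℝ) (x xs ξ : Ed d) :
    coll γ σ x xs ξ = diag (fun i => 1 - γ i) x + diag γ xs + σ • ξ := by
  ext i
  simp [coll, PiLp.add_apply, PiLp.smul_apply, smul_eq_mul]

section prodstuff

variable {X Y : Type*} [MeasurableSpace X] [MeasurableSpace Y]
  {F : Type*} [NormedAddCommGroup F] [NormedSpace ℝ F]

omit [NormedSpace ℝ F] in
lemma proj_integrable {ρ : Measure X} {m : Measure Y} {pr : X → Y} (hpr : Measurable pr)
    (hmap : Measure.map pr ρ = m) {g : Y → F} (hgi : Integrable g m) :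
    Integrable (fun p => g (pr p)) ρ :=
  (integrable_map_measure
    (by rw [hmap]; exact hgi.aestronglyMeasurable) hpr.aemeasurable).mp (by rwa [hmap])

lemma proj_integral {ρ : Measure X} {m : Measure Y} {pr : X → Y} (hpr : Measurable pr)
    (hmap : Measure.map pr ρ = m) {g : Y → F} (hg : AEStronglyMeasurable g m) :
    ∫ p, g (pr p) ∂ρ = ∫ x, g x ∂m := by
  rw [← hmap, integral_map hpr.aemeasurable (by rwa [hmap])]

end prodstuff

variable (m1 m2 m3 : Measure (Ed d))
  [IsProbabilityMeasure m1] [IsProbabilityMeasure m2] [IsProbabilityMeasure m3]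

lemma map_fst_fst :
    Measure.map (fun p : (Ed d × Ed d) × Ed d => p.1.1) ((m1.prod m2).prod m3) = m1 := by
  have h : (fun p : (Ed d × Ed d) × Ed d => p.1.1) = Prod.fst ∘ Prod.fst := rfl
  rw [h, ← Measure.map_map measurable_fst measurable_fst, Measure.map_fst_prod,
    measure_univ, one_smul, Measure.map_fst_prod, measure_univ, one_smul]

lemma map_snd_fst :
    Measure.map (fun p : (Ed d × Ed d) × Ed d => p.1.2) ((m1.prod m2).prod m3) = m2 := by
  have h : (fun p : (Ed d × Ed d) × Ed d => p.1.2) = Prod.snd ∘ Prod.fst := rfl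
  rw [h, ← Measure.map_map measurable_snd measurable_fst, Measure.map_fst_prod,
    measure_univ, one_smul, Measure.map_snd_prod, measure_univ, one_smul]

lemma map_snd :
    Measure.map (fun p : (Ed d × Ed d) × Ed d => p.2) ((m1.prod m2).prod m3) = m3 := by
  have h : (fun p : (Ed d × Ed d) × Ed d => p.2) = Prod.snd := rfl
  rw [h, Measure.map_snd_prod, measure_univ, one_smul]

variable {γ : Fin d → ℝ} {σ : ℝ}

lemma coll_norm_integrable (hγ : ∀ i, γ i ∈ Set.Icc (0:ℝ) 1)
    (h1 : Integrable (fun x : Ed d => ‖x‖) m1) (h2 : Integrable (fun x : Ed d => ‖x‖) m2)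
    (h3 : Integrable (fun x : Ed d => ‖x‖) m3) :
    Integrable (fun p : (Ed d × Ed d) × Ed d => ‖coll γ σ p.1.1 p.1.2 p.2‖)
      ((m1.prod m2).prod m3) := by
  have hb1 : ∀ i, |1 - γ i| ≤ 1 := fun i => by
    rw [abs_le]; constructor <;> [linarith [(hγ i).2]; linarith [(hγ i).1]]
  have hb2 : ∀ i, |γ i| ≤ 1 := fun i => by
    rw [abs_le]; constructor <;> [linarith [(hγ i).1]; linarith [(hγ i).2]]
  have hi1 := proj_integrable (measurable_fst.comp measurable_fst)
    (map_fst_fst m1 m2 m3) h1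
  have hi2 := proj_integrable (measurable_snd.comp measurable_fst)
    (map_snd_fst m1 m2 m3) h2
  have hi3 := proj_integrable measurable_snd (map_snd m1 m2 m3) h3
  refine Integrable.mono'
    (g := fun p : (Ed d × Ed d) × Ed d => ‖p.1.1‖ + ‖p.1.2‖ + |σ| * ‖p.2‖)
    ((hi1.add hi2).add (hi3.const_mul _))
    ((measurable_coll γ σ).norm.aestronglyMeasurable) (ae_of_all _ fun p => ?_)
  rw [Real.norm_eq_abs, abs_of_nonneg (norm_nonneg _), coll_eq]
  calc ‖diag (fun i => 1 - γ i) p.1.1 + diag γ p.1.2 + σ • p.2‖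
      ≤ ‖diag (fun i => 1 - γ i) p.1.1‖ + ‖diag γ p.1.2‖ + ‖σ • p.2‖ :=
        norm_add₃_le
    _ ≤ ‖p.1.1‖ + ‖p.1.2‖ + |σ| * ‖p.2‖ := by
        rw [norm_smul, Real.norm_eq_abs]
        gcongr
        · exact norm_diag_le _ hb1 _
        · exact norm_diag_le _ hb2 _

lemma coll_integral
    (h1 : Integrable (fun x : Ed d => x) m1) (h2 : Integrable (fun x : Ed d => x) m2)
    (h3 : Integrable (fun x : Ed d => x) m3) :
    ∫ p, coll γ σ p.1.1 p.1.2 p.2 ∂((m1.prod m2).prod m3)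
      = diag (fun i => 1 - γ i) (∫ x, x ∂m1) + diag γ (∫ x, x ∂m2)
        + σ • (∫ x, x ∂m3) := by
  have hπ1 : Measurable (fun p : (Ed d × Ed d) × Ed d => p.1.1) :=
    measurable_fst.comp measurable_fst
  have hπ2 : Measurable (fun p : (Ed d × Ed d) × Ed d => p.1.2) :=
    measurable_snd.comp measurable_fst
  have hπ3 : Measurable (fun p : (Ed d × Ed d) × Ed d => p.2) := measurable_snd
  have hg1 : Integrable (fun x : Ed d => diag (fun i => 1 - γ i) x) m1 :=
    (diag _).integrable_comp h1
  have hg2 : Integrable (fun x : Ed d => diag γ x) m2 := (diag _).integrable_comp h2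
  have hg3 : Integrable (fun x : Ed d => σ • x) m3 := h3.smul σ
  have hi1 := proj_integrable hπ1 (map_fst_fst m1 m2 m3) hg1
  have hi2 := proj_integrable hπ2 (map_snd_fst m1 m2 m3) hg2
  have hi3 := proj_integrable hπ3 (map_snd m1 m2 m3) hg3
  have hrw : (fun p : (Ed d × Ed d) × Ed d => coll γ σ p.1.1 p.1.2 p.2)
      = fun p : (Ed d × Ed d) × Ed d =>
        diag (fun i => 1 - γ i) p.1.1 + diag γ p.1.2 + σ • p.2 := by
    funext p; rw [coll_eq]
  rw [hrw]
  have hsum : Integrable (fun p : (Ed d × Ed d) × Ed d =>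
      diag (fun i => 1 - γ i) p.1.1 + diag γ p.1.2) ((m1.prod m2).prod m3) := hi1.add hi2
  rw [integral_add hsum hi3, integral_add hi1 hi2]
  rw [proj_integral hπ1 (map_fst_fst m1 m2 m3) hg1.aestronglyMeasurable,
    proj_integral hπ2 (map_snd_fst m1 m2 m3) hg2.aestronglyMeasurable,
    proj_integral hπ3 (map_snd m1 m2 m3) hg3.aestronglyMeasurable]
  rw [(diag (fun i => 1 - γ i)).integral_comp_comm h1,
    (diag γ).integral_comp_comm h2, integral_smul]

/-! ### The one–step lemma -/

lemma step {E : Ed d → ℝ} {α M τ : ℝ} {γ : Fin d → ℝ} {σ : ℝ}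
    (hEc : Continuous E) (hM : ∀ x, rexp (-α * E x) ≤ M)
    (hτ : τ ∈ Set.Ioc (0 : ℝ) 1) (hγ : ∀ i, γ i ∈ Set.Icc (0:ℝ) 1)
    (f : Measure (Ed d)) [IsProbabilityMeasure f]
    (hf : Integrable (fun x : Ed d => ‖x‖) f) :
    IsProbabilityMeasure (gaStep E α τ σ γ f) ∧
    Integrable (fun x : Ed d => ‖x‖) (gaStep E α τ σ γ f) ∧
    (∫ x, x ∂(gaStep E α τ σ γ f)) = (1 - τ) • (∫ x, x ∂f) + τ • wmean E α f := by
  haveI hη : IsProbabilityMeasure (gibbs E α f) := gibbs_isProb hEc hM f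
  have hηn : Integrable (fun x : Ed d => ‖x‖) (gibbs E α f) :=
    gibbs_integrable hEc hM f hf
  have hηi : Integrable (fun x : Ed d => x) (gibbs E α f) :=
    (integrable_norm_iff aestronglyMeasurable_id).mp hηn
  have hc : Measurable (fun p : (Ed d × Ed d) × Ed d => coll γ σ p.1.1 p.1.2 p.2) :=
    measurable_coll γ σ
  set ρ := ((gibbs E α f).prod (gibbs E α f)).prod (stdGaussian d) with hρ
  set ν := Measure.map (fun p : (Ed d × Ed d) × Ed d => coll γ σ p.1.1 p.1.2 p.2) ρ with hν
  haveI hνp : IsProbabilityMeasure ν := Measure.isProbabilityMeasure_map hc.aemeasurable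
  have hνn : Integrable (fun x : Ed d => ‖x‖) ν := by
    rw [hν, integrable_map_measure measurable_norm.aestronglyMeasurable hc.aemeasurable]
    exact coll_norm_integrable (gibbs E α f) (gibbs E α f) (stdGaussian d) hγ hηn hηn
      integrable_norm_stdGaussian
  have hνi : Integrable (fun x : Ed d => x) ν :=
    (integrable_norm_iff aestronglyMeasurable_id).mp hνn
  have hνm : (∫ x, x ∂ν) = wmean E α f := by
    have e1 : (∫ x, x ∂ν) = ∫ p, coll γ σ p.1.1 p.1.2 p.2 ∂ρ :=
      integral_map hc.aemeasurable aestronglyMeasurable_id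
    rw [e1, coll_integral (gibbs E α f) (gibbs E α f) (stdGaussian d) hηi hηi
      integrable_id_stdGaussian, gibbs_mean hEc hM f, integral_stdGaussian,
      smul_zero, add_zero]
    ext i
    simp only [PiLp.add_apply, diag_apply]
    ring
  have hfi : Integrable (fun x : Ed d => x) f :=
    (integrable_norm_iff aestronglyMeasurable_id).mp hf
  refine ⟨?_, ?_, ?_⟩
  · constructor
    rw [gaStep, ← hρ, ← hν, Measure.add_apply, Measure.smul_apply, Measure.smul_apply,
      measure_univ, measure_univ, smul_eq_mul, smul_eq_mul, mul_one, mul_one,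
      ← ENNReal.ofReal_add (by linarith [hτ.2]) hτ.1.le]
    norm_num
  · rw [gaStep, ← hρ, ← hν]
    exact (hf.smul_measure ENNReal.ofReal_ne_top).add_measure
      (hνn.smul_measure ENNReal.ofReal_ne_top)
  · rw [gaStep, ← hρ, ← hν,
      integral_add_measure (hfi.smul_measure ENNReal.ofReal_ne_top)
        (hνi.smul_measure ENNReal.ofReal_ne_top),
      integral_smul_measure, integral_smul_measure,
      ENNReal.toReal_ofReal (by linarith [hτ.2] : (0:ℝ) ≤ 1 - τ),
      ENNReal.toReal_ofReal hτ.1.le, hνm]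

end GAux

/-- **Evolution of the mean under the GA kinetic update with Boltzmann selection:**
each `f_(k)` has finite first moment,
`m[f_(k+1)] = (1−τ) m[f_(k)] + τ m^α[f_(k)]`, and consequently
`|m[f_(k+1)] − x⋆| ≤ (1−τ)|m[f_(k)] − x⋆| + τ|m^α[f_(k)] − x⋆|` for any `x⋆`. -/
theorem ga_mean_evolution
    {d : ℕ} (hd : 1 ≤ d) (E : Ed d → ℝ) (hE : Continuous E)
    (hEbdd : BddBelow (Set.range E))
    (α : ℝ) (hα : 0 < α)
    (τ : ℝ) (hτ : τ ∈ Set.Ioc (0 : ℝ) 1)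
    (γ : Fin d → ℝ) (hγ : ∀ i, γ i ∈ Set.Icc (0 : ℝ) 1)
    (σ : ℝ) (hσ : 0 < σ)
    (f0 : Measure (Ed d)) [IsProbabilityMeasure f0]
    (hf0mom : Integrable (fun x => ‖x‖) f0) :
    ∀ k : ℕ,
      Integrable (fun x => ‖x‖) (gaSeq E α τ σ γ f0 k) ∧
      mean (gaSeq E α τ σ γ f0 (k + 1)) =
        (1 - τ) • mean (gaSeq E α τ σ γ f0 k) + τ • wmean E α (gaSeq E α τ σ γ f0 k) ∧
      ∀ xstar : Ed d,
        ‖mean (gaSeq E α τ σ γ f0 (k + 1)) - xstar‖ ≤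
          (1 - τ) * ‖mean (gaSeq E α τ σ γ f0 k) - xstar‖ +
            τ * ‖wmean E α (gaSeq E α τ σ γ f0 k) - xstar‖ := by
  -- bound on the weight
  obtain ⟨B, hB⟩ := hEbdd
  have hM : ∀ x, rexp (-α * E x) ≤ rexp (-α * B) := by
    intro x
    apply Real.exp_le_exp.mpr
    have : B ≤ E x := hB ⟨x, rfl⟩
    nlinarith
  -- induction : probability + integrability
  have hprob : ∀ k, IsProbabilityMeasure (gaSeq E α τ σ γ f0 k) ∧
      Integrable (fun x : Ed d => ‖x‖) (gaSeq E α τ σ γ f0 k) := by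
    intro k
    induction k with
    | zero => exact ⟨‹IsProbabilityMeasure f0›, hf0mom⟩
    | succ n ih =>
      haveI := ih.1
      obtain ⟨h1, h2, _⟩ := GAux.step hE hM hτ hγ (gaSeq E α τ σ γ f0 n) ih.2
      exact ⟨h1, h2⟩
  intro k
  haveI := (hprob k).1
  obtain ⟨_, _, hMean⟩ := GAux.step hE hM hτ hγ (gaSeq E α τ σ γ f0 k) (hprob k).2
  have hmean : mean (gaSeq E α τ σ γ f0 (k + 1)) =
      (1 - τ) • mean (gaSeq E α τ σ γ f0 k) + τ • wmean E α (gaSeq E α τ σ γ f0 k) :=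
    hMean
  refine ⟨(hprob k).2, hmean, ?_⟩
  intro xstar
  set ma := mean (gaSeq E α τ σ γ f0 k)
  set wa := wmean E α (gaSeq E α τ σ γ f0 k)
  have hτ1 : (0:ℝ) ≤ 1 - τ := by linarith [hτ.2]
  have hx : (1 - τ) • ma + τ • wa - xstar = (1 - τ) • (ma - xstar) + τ • (wa - xstar) := by
    have hτs : (1 - τ) • xstar + τ • xstar = xstar := by
      rw [← add_smul]; norm_num
    have h1 : (1 - τ) • (ma - xstar) + τ • (wa - xstar)
        = (1 - τ) • ma + τ • wa - ((1 - τ) • xstar + τ • xstar) := by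
      rw [smul_sub, smul_sub]; abel
    rw [h1, hτs]
  rw [hmean, hx]
  calc ‖(1 - τ) • (ma - xstar) + τ • (wa - xstar)‖
      ≤ ‖(1 - τ) • (ma - xstar)‖ + ‖τ • (wa - xstar)‖ := norm_add_le _ _
    _ = (1 - τ) * ‖ma - xstar‖ + τ * ‖wa - xstar‖ := by
        rw [norm_smul, norm_smul, Real.norm_eq_abs, Real.norm_eq_abs,
          abs_of_nonneg hτ1, abs_of_nonneg hτ.1.le]
end
end
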